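/- arXiv:2411.03139 — 7 statements merged into one kernel-verified Lean document; each statement's English description precedes it below -/
import Mathlib

section
/- Let L ⊆ 2^[m] be a natural distributive lattice, with L = J(P) for a partial order P on [m]. Suppose p is a probability distribution on 2^[m] with supp(p) = L, and suppose p satisfies all the pairwise Markov statements of a graph G = ([m], E). Then p factors according to the graph G. -/
open scoped BigOperators
attribute [local instance] Classical.propDecidable

noncomputable section

/-- The order ideals of a partial order `P` on `Fin m`. -/
def orderIdeals {m : ℕ} (P : PartialOrder (Fin m)) : Set (Finset (Fin m)) :=
  {S | ∀ t ∈ S, ∀ s, P.le s t → s ∈ S}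

/-- `i` covers `j` in the partial order `P`. -/
def Covers {m : ℕ} (P : PartialOrder (Fin m)) (i j : Fin m) : Prop :=
  P.lt j i ∧ ∀ r, ¬ (P.lt j r ∧ P.lt r i)

/-- The minimal graph of a natural lattice `L = J(P)`: edges are the cover relations of `P`. -/
def minimalGraph {m : ℕ} (P : PartialOrder (Fin m)) : SimpleGraph (Fin m) where
  Adj i j := Covers P i j ∨ Covers P j i
  symm := ⟨by intro i j h; tauto⟩
  loopless := ⟨by
    intro i h
    rcases h with h | h <;>
      exact ((P.lt_iff_le_not_ge i i).mp h.1).2 ((P.lt_iff_le_not_ge i i).mp h.1).1⟩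

/-- `p` satisfies the pairwise Markov statements of `G`. -/
def PairwiseMarkov {m : ℕ} (G : SimpleGraph (Fin m)) (p : Finset (Fin m) → ℝ) : Prop :=
  ∀ i j : Fin m, i ≠ j → ¬ G.Adj i j →
    ∀ C : Finset (Fin m), i ∉ C → j ∉ C →
      p C * p (C ∪ {i, j}) = p (C ∪ {i}) * p (C ∪ {j})

/-- `S` is a maximal clique of `G`. -/
def IsMaxClique {m : ℕ} (G : SimpleGraph (Fin m)) (S : Finset (Fin m)) : Prop :=
  G.IsClique (S : Set (Fin m)) ∧
    ∀ T : Finset (Fin m), G.IsClique (T : Set (Fin m)) → S ⊆ T → T = S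

/-- `p` factors according to the graph `G`: there are nonnegative parameters `a S T`,
one for each maximal clique `S` of `G` and each `T ⊆ S`, and `Z > 0`, such that
`p T = (1/Z) * ∏_{S maximal clique} a S (S ∩ T)`. -/
def FactorsAccording {m : ℕ} (G : SimpleGraph (Fin m)) (p : Finset (Fin m) → ℝ) : Prop :=
  ∃ (a : Finset (Fin m) → Finset (Fin m) → ℝ) (Z : ℝ),
    0 < Z ∧ (∀ S T, 0 ≤ a S T) ∧
    ∀ T : Finset (Fin m),
      p T = (1 / Z) * ∏ S ∈ Finset.univ.filter (fun S => IsMaxClique G S), a S (S ∩ T)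


section Helpers

variable {m : ℕ} (P : PartialOrder (Fin m))

lemma ple_refl (a : Fin m) : P.le a a := P.le_refl a
lemma ple_trans {a b c : Fin m} (h1 : P.le a b) (h2 : P.le b c) : P.le a c := P.le_trans _ _ _ h1 h2
lemma plt_iff {a b : Fin m} : P.lt a b ↔ P.le a b ∧ ¬ P.le b a := P.lt_iff_le_not_ge a b
lemma ple_of_plt {a b : Fin m} (h : P.lt a b) : P.le a b := ((plt_iff P).mp h).1
lemma pne_of_plt {a b : Fin m} (h : P.lt a b) : a ≠ b := by
  rintro rfl; exact ((plt_iff P).mp h).2 (P.le_refl a)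
lemma plt_of_le_ne {a b : Fin m} (h : P.le a b) (hne : a ≠ b) : P.lt a b := by
  rw [plt_iff]
  exact ⟨h, fun h' => hne (P.le_antisymm _ _ h h')⟩
lemma plt_of_le_of_lt {a b c : Fin m} (h1 : P.le a b) (h2 : P.lt b c) : P.lt a c := by
  rw [plt_iff] at h2 ⊢
  exact ⟨ple_trans P h1 h2.1, fun h => h2.2 (ple_trans P h h1)⟩
lemma plt_of_lt_of_le {a b c : Fin m} (h1 : P.lt a b) (h2 : P.le b c) : P.lt a c := by
  rw [plt_iff] at h1 ⊢
  exact ⟨ple_trans P h1.1 h2, fun h => h1.2 (ple_trans P h2 h)⟩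
lemma plt_irrefl (a : Fin m) : ¬ P.lt a a := fun h => pne_of_plt P h rfl

/-- rank function: a strictly monotone ℕ-valued map. -/
def rankf : Fin m → ℕ := fun a => (Finset.univ.filter (fun x => P.le x a)).card

lemma rankf_strict {a b : Fin m} (h : P.lt a b) : rankf P a < rankf P b := by
  apply Finset.card_lt_card
  constructor
  · intro x hx
    simp only [Finset.mem_filter, Finset.mem_univ, true_and] at hx ⊢
    exact ple_trans P hx (ple_of_plt P h)
  · intro hsub
    have hb : b ∈ Finset.univ.filter (fun x => P.le x b) := by
      simp [ple_refl P b]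
    have := hsub hb
    simp only [Finset.mem_filter, Finset.mem_univ, true_and] at this
    exact pne_of_plt P h (P.le_antisymm _ _ (ple_of_plt P h) this)

/-- Relative order ideal inside ground set `M`. -/
def RelIdeal (M A : Finset (Fin m)) : Prop :=
  A ⊆ M ∧ ∀ a ∈ A, ∀ b ∈ M, P.le b a → b ∈ A

lemma relIdeal_union {M A B : Finset (Fin m)} (hA : RelIdeal P M A) (hB : RelIdeal P M B) :
    RelIdeal P M (A ∪ B) := by
  refine ⟨Finset.union_subset hA.1 hB.1, ?_⟩
  intro a ha b hb hle
  rcases Finset.mem_union.mp ha with h | h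
  · exact Finset.mem_union.mpr (Or.inl (hA.2 a h b hb hle))
  · exact Finset.mem_union.mpr (Or.inr (hB.2 a h b hb hle))

lemma relIdeal_insert {M S : Finset (Fin m)} {e : Fin m}
    (hS : RelIdeal P M S) (he : e ∈ M)
    (hdown : ∀ c ∈ M, P.le c e → c ≠ e → c ∈ S) :
    RelIdeal P M (insert e S) := by
  refine ⟨Finset.insert_subset he hS.1, ?_⟩
  intro a ha c hcM hle
  rcases Finset.mem_insert.mp ha with rfl | ha'
  · by_cases hce : c = a
    · rw [hce]; exact Finset.mem_insert_self _ _
    · exact Finset.mem_insert_of_mem (hdown c hcM hle hce)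
  · exact Finset.mem_insert_of_mem (hS.2 a ha' c hcM hle)

end Helpers

/-- The core combinatorial lemma: a function on relative order ideals satisfying the
quadratic exchange relations along non-adjacent pairs decomposes as a sum of clique
potentials. -/
lemma lemmaC {m : ℕ} (P : PartialOrder (Fin m)) (G : SimpleGraph (Fin m))
    (M : Finset (Fin m)) :
    ∀ g : Finset (Fin m) → ℝ,
    (∀ A j j', RelIdeal P M A → j ∈ M → j' ∈ M → j ∉ A → j' ∉ A → j ≠ j' →
      ¬ G.Adj j j' → RelIdeal P M (insert j A) → RelIdeal P M (insert j' A) →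
      g (insert j (insert j' A)) + g A = g (insert j A) + g (insert j' A)) →
    ∃ h : Finset (Fin m) → ℝ,
      (∀ B : Finset (Fin m), ¬ (G.IsClique (B : Set (Fin m)) ∧ B ⊆ M) → h B = 0) ∧
      ∀ A, RelIdeal P M A → g A = ∑ B ∈ A.powerset, h B := by
  induction M using Finset.strongInductionOn with
  | _ M ih =>
  intro g H
  rcases M.eq_empty_or_nonempty with rfl | hne
  · refine ⟨fun B => if B = ∅ then g ∅ else 0, ?_, ?_⟩
    · intro B hB
      have hBne : B ≠ ∅ := by rintro rfl; exact hB ⟨by simp, Finset.Subset.refl _⟩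
      exact if_neg hBne
    · intro A hA
      have hA0 : A = ∅ := Finset.subset_empty.mp hA.1
      subst hA0
      simp
  -- main case
  obtain ⟨z, hzM, hzmax⟩ := Finset.exists_max_image M (rankf P) hne
  have hzPmax : ∀ b ∈ M, ¬ P.lt z b := fun b hb hlt =>
    absurd (rankf_strict P hlt) (not_lt.mpr (hzmax b hb))
  set M₀ := M.erase z with hM₀
  have hM₀sub : M₀ ⊆ M := Finset.erase_subset _ _
  have relI : ∀ A : Finset (Fin m), A ⊆ M₀ → (RelIdeal P M₀ A ↔ RelIdeal P M A) := by
    intro A hAM₀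
    constructor
    · intro hA
      refine ⟨hAM₀.trans hM₀sub, ?_⟩
      intro a ha b hbM hle
      by_cases hbz : b = z
      · subst hbz
        have haM : a ∈ M := hM₀sub (hAM₀ ha)
        have haz : b ≠ a := ((Finset.mem_erase.mp (hAM₀ ha)).1).symm
        exact ((hzPmax a haM) (plt_of_le_ne P hle haz)).elim
      · exact hA.2 a ha b (Finset.mem_erase.mpr ⟨hbz, hbM⟩) hle
    · intro hA
      exact ⟨hAM₀, fun a ha b hb hle => hA.2 a ha b (hM₀sub hb) hle⟩
  have H₀ : ∀ A j j', RelIdeal P M₀ A → j ∈ M₀ → j' ∈ M₀ → j ∉ A → j' ∉ A → j ≠ j' →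
      ¬ G.Adj j j' → RelIdeal P M₀ (insert j A) → RelIdeal P M₀ (insert j' A) →
      g (insert j (insert j' A)) + g A = g (insert j A) + g (insert j' A) := by
    intro A j j' hA hj hj' hjA hj'A hne' hnadj hAj hAj'
    exact H A j j' ((relI A hA.1).mp hA) (hM₀sub hj) (hM₀sub hj') hjA hj'A hne' hnadj
      ((relI _ hAj.1).mp hAj) ((relI _ hAj'.1).mp hAj')
  obtain ⟨h₀, h₀supp, h₀sum⟩ := ih M₀ (Finset.erase_ssubset hzM) g H₀
  set Nz := M₀.filter (fun b => G.Adj z b) with hNzdef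
  set M'' := Nz.filter (fun b => ¬ P.lt b z) with hM''def
  have hNzsub : Nz ⊆ M₀ := Finset.filter_subset _ _
  have hM''Nz : M'' ⊆ Nz := Finset.filter_subset _ _
  have hM''M : M'' ⊆ M := fun a ha => hM₀sub (hNzsub (hM''Nz ha))
  have zNotNz : z ∉ Nz := fun h => (Finset.mem_erase.mp (hNzsub h)).1 rfl
  have notle_zM'' : ∀ y ∈ M'', ¬ P.le z y := by
    intro y hy hle
    by_cases hzy : z = y
    · exact zNotNz (hM''Nz (hzy ▸ hy))
    · exact hzPmax y (hM''M hy) (plt_of_le_ne P hle hzy)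
  -- step A1: invariance of the increment at z under changes away from the neighborhood of z
  have A1 : ∀ n : ℕ, ∀ X X' : Finset (Fin m),
      (RelIdeal P M X ∧ z ∉ X ∧ RelIdeal P M (insert z X)) →
      (RelIdeal P M X' ∧ z ∉ X' ∧ RelIdeal P M (insert z X')) →
      X ⊆ X' → (∀ b ∈ X', b ∉ X → ¬ G.Adj z b) → (X' \ X).card ≤ n →
      g (insert z X) - g X = g (insert z X') - g X' := by
    intro n
    induction n with
    | zero =>
      intro X X' hX hX' hsub hna hcard
      have hemp : X' \ X = ∅ := Finset.card_eq_zero.mp (Nat.le_zero.mp hcard)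
      have hXX' : X = X' := by
        apply Finset.Subset.antisymm hsub
        intro a ha
        by_contra haX
        have : a ∈ X' \ X := Finset.mem_sdiff.mpr ⟨ha, haX⟩
        rw [hemp] at this
        exact absurd this (Finset.notMem_empty a)
      rw [hXX']
    | succ n ihn =>
      intro X X' hX hX' hsub hna hcard
      rcases Finset.eq_empty_or_nonempty (X' \ X) with hemp | hne'
      · have hXX' : X = X' := by
          apply Finset.Subset.antisymm hsub
          intro a ha
          by_contra haX
          have : a ∈ X' \ X := Finset.mem_sdiff.mpr ⟨ha, haX⟩
          rw [hemp] at this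
          exact absurd this (Finset.notMem_empty a)
        rw [hXX']
      · obtain ⟨b, hbmem, hbmax⟩ := Finset.exists_max_image _ (rankf P) hne'
        have hbX' : b ∈ X' := (Finset.mem_sdiff.mp hbmem).1
        have hbX : b ∉ X := (Finset.mem_sdiff.mp hbmem).2
        have hbM : b ∈ M := hX'.1.1 hbX'
        have hbz : b ≠ z := fun h => hX'.2.1 (h ▸ hbX')
        have hbmaxP : ∀ c ∈ X', P.lt b c → c ∈ X := by
          intro c hc hlt
          by_contra hcX
          exact absurd (rankf_strict P hlt)
            (not_lt.mpr (hbmax c (Finset.mem_sdiff.mpr ⟨hc, hcX⟩)))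
        have hbtop : ∀ c ∈ X', P.lt b c → False := by
          intro c hc hlt
          exact hbX (hX.1.2 c (hbmaxP c hc hlt) b hbM (ple_of_plt P hlt))
        have hX''sub : X'.erase b ⊆ X' := Finset.erase_subset _ _
        have hXX'' : X ⊆ X'.erase b := Finset.subset_erase.mpr ⟨hsub, hbX⟩
        have hX''rel : RelIdeal P M (X'.erase b) := by
          refine ⟨hX''sub.trans hX'.1.1, ?_⟩
          intro a ha c hcM hle
          have haX' : a ∈ X' := hX''sub ha
          refine Finset.mem_erase.mpr ⟨?_, hX'.1.2 a haX' c hcM hle⟩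
          rintro rfl
          exact hbtop a haX' (plt_of_le_ne P hle ((Finset.mem_erase.mp ha).1).symm)
        have hzX'' : z ∉ X'.erase b := fun h => hX'.2.1 (hX''sub h)
        have hzX''ins : RelIdeal P M (insert z (X'.erase b)) := by
          refine ⟨?_, ?_⟩
          · intro a ha
            rcases Finset.mem_insert.mp ha with rfl | ha'
            · exact hzM
            · exact hX'.1.1 (hX''sub ha')
          · intro a ha c hcM hle
            have haI : a ∈ insert z X' := by
              rcases Finset.mem_insert.mp ha with rfl | ha'
              · exact Finset.mem_insert_self _ _
              · exact Finset.mem_insert_of_mem (hX''sub ha')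
            have hcI : c ∈ insert z X' := hX'.2.2.2 a haI c hcM hle
            rcases Finset.mem_insert.mp hcI with rfl | hcX'
            · exact Finset.mem_insert_self _ _
            · refine Finset.mem_insert_of_mem (Finset.mem_erase.mpr ⟨?_, hcX'⟩)
              intro hcb
              rcases Finset.mem_insert.mp ha with haz | haX''
              · have hle' : P.le b z := by rw [← hcb, ← haz]; exact hle
                have hb' : b ∈ insert z X := hX.2.2.2 z (Finset.mem_insert_self _ _) b hbM hle'
                rcases Finset.mem_insert.mp hb' with h | h
                · exact hbz h
                · exact hbX h
              · have hle' : P.le b a := by rw [← hcb]; exact hle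
                exact hbtop a (hX''sub haX'')
                  (plt_of_le_ne P hle' ((Finset.mem_erase.mp haX'').1).symm)
        have hins : insert b (X'.erase b) = X' := Finset.insert_erase hbX'
        have key := H (X'.erase b) z b hX''rel hzM hbM hzX'' (Finset.notMem_erase b X')
          (fun h => hbz h.symm) (hna b hbX' hbX) hzX''ins (by rw [hins]; exact hX'.1)
        rw [hins] at key
        have hcard'' : (X'.erase b \ X).card ≤ n := by
          have hsd : X'.erase b \ X = (X' \ X).erase b := by
            ext c
            simp only [Finset.mem_sdiff, Finset.mem_erase]
            tauto
          have hpos := Finset.card_pos.mpr ⟨b, hbmem⟩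
          rw [hsd, Finset.card_erase_of_mem hbmem]
          omega
        have hrec := ihn X (X'.erase b) hX ⟨hX''rel, hzX'', hzX''ins⟩ hXX''
          (fun c hc hcX => hna c (hX''sub hc) hcX) hcard''
        linarith [key, hrec]
  have deltaEq : ∀ X X' : Finset (Fin m),
      (RelIdeal P M X ∧ z ∉ X ∧ RelIdeal P M (insert z X)) →
      (RelIdeal P M X' ∧ z ∉ X' ∧ RelIdeal P M (insert z X')) →
      X ∩ Nz = X' ∩ Nz →
      g (insert z X) - g X = g (insert z X') - g X' := by
    intro X X' hX hX' htr
    have hUins : insert z X ∪ insert z X' = insert z (X ∪ X') := by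
      ext a
      simp only [Finset.mem_union, Finset.mem_insert]
      tauto
    have hUadd : RelIdeal P M (X ∪ X') ∧ z ∉ X ∪ X' ∧ RelIdeal P M (insert z (X ∪ X')) := by
      refine ⟨relIdeal_union P hX.1 hX'.1, ?_, ?_⟩
      · simp [hX.2.1, hX'.2.1]
      · rw [← hUins]
        exact relIdeal_union P hX.2.2 hX'.2.2
    have haux : ∀ W W' : Finset (Fin m),
        (RelIdeal P M W ∧ z ∉ W ∧ RelIdeal P M (insert z W)) →
        (RelIdeal P M W' ∧ z ∉ W' ∧ RelIdeal P M (insert z W')) →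
        W ∩ Nz = W' ∩ Nz → W ⊆ W' →
        g (insert z W) - g W = g (insert z W') - g W' := by
      intro W W' hW hW' htr' hsub
      apply A1 ((W' \ W).card) W W' hW hW' hsub ?_ le_rfl
      intro c hc hcW hadj
      have hcNz : c ∈ Nz := by
        rw [hNzdef]
        refine Finset.mem_filter.mpr ⟨Finset.mem_erase.mpr ⟨?_, hW'.1.1 hc⟩, hadj⟩
        rintro rfl
        exact hW'.2.1 hc
      have : c ∈ W ∩ Nz := by
        rw [htr']
        exact Finset.mem_inter.mpr ⟨hc, hcNz⟩
      exact hcW (Finset.mem_inter.mp this).1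
    have htr1 : X ∩ Nz = (X ∪ X') ∩ Nz := by
      rw [Finset.union_inter_distrib_right, ← htr, Finset.union_self]
    have htr2 : X' ∩ Nz = (X ∪ X') ∩ Nz := by
      rw [Finset.union_inter_distrib_right, htr, Finset.union_self]
    have e1 := haux X (X ∪ X') hX hUadd htr1 Finset.subset_union_left
    have e2 := haux X' (X ∪ X') hX' hUadd htr2 Finset.subset_union_right
    linarith
  -- canonical witness for a trace on M''
  set Fz := Nz.filter (fun b => P.lt b z) with hFzdef
  set Cw : Finset (Fin m) → Finset (Fin m) :=
    fun Y => M.filter (fun b => P.lt b z ∨ ∃ y ∈ Y, P.le b y) with hCwdef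
  have CwAdd : ∀ Y, RelIdeal P M'' Y →
      RelIdeal P M (Cw Y) ∧ z ∉ Cw Y ∧ RelIdeal P M (insert z (Cw Y)) := by
    intro Y hY
    have hsub : Cw Y ⊆ M := Finset.filter_subset _ _
    have hrel : RelIdeal P M (Cw Y) := by
      refine ⟨hsub, ?_⟩
      intro a ha c hcM hle
      have ha' := Finset.mem_filter.mp ha
      refine Finset.mem_filter.mpr ⟨hcM, ?_⟩
      rcases ha'.2 with h | ⟨y, hy, hley⟩
      · exact Or.inl (plt_of_le_of_lt P hle h)
      · exact Or.inr ⟨y, hy, ple_trans P hle hley⟩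
    have hz : z ∉ Cw Y := by
      intro h
      rcases (Finset.mem_filter.mp h).2 with h' | ⟨y, hy, hley⟩
      · exact plt_irrefl P z h'
      · exact notle_zM'' y (hY.1 hy) hley
    refine ⟨hrel, hz, relIdeal_insert P hrel hzM ?_⟩
    intro c hcM hle hcz
    exact Finset.mem_filter.mpr ⟨hcM, Or.inl (plt_of_le_ne P hle hcz)⟩
  have traceCw : ∀ Y, RelIdeal P M'' Y → Cw Y ∩ Nz = Fz ∪ Y := by
    intro Y hY
    ext c
    simp only [Finset.mem_inter, Finset.mem_union]
    constructor
    · rintro ⟨hcC, hcNz⟩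
      by_cases hlt : P.lt c z
      · exact Or.inl (Finset.mem_filter.mpr ⟨hcNz, hlt⟩)
      · rcases (Finset.mem_filter.mp hcC).2 with h | ⟨y, hy, hle⟩
        · exact absurd h hlt
        · exact Or.inr (hY.2 y hy c (Finset.mem_filter.mpr ⟨hcNz, hlt⟩) hle)
    · rintro (h | h)
      · have h' := Finset.mem_filter.mp h
        have hcM : c ∈ M := hM₀sub (hNzsub h'.1)
        exact ⟨Finset.mem_filter.mpr ⟨hcM, Or.inl h'.2⟩, h'.1⟩
      · have hcM'' : c ∈ M'' := hY.1 h
        exact ⟨Finset.mem_filter.mpr ⟨hM''M hcM'', Or.inr ⟨c, h, ple_refl P c⟩⟩,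
          hM''Nz hcM''⟩
  have traceX : ∀ X : Finset (Fin m), RelIdeal P M X → z ∉ X → RelIdeal P M (insert z X) →
      X ∩ Nz = Fz ∪ (X ∩ M'') := by
    intro X hX hzX hXz
    ext c
    simp only [Finset.mem_inter, Finset.mem_union]
    constructor
    · rintro ⟨hcX, hcNz⟩
      by_cases hlt : P.lt c z
      · exact Or.inl (Finset.mem_filter.mpr ⟨hcNz, hlt⟩)
      · exact Or.inr ⟨hcX, Finset.mem_filter.mpr ⟨hcNz, hlt⟩⟩
    · rintro (h | h)
      · have h' := Finset.mem_filter.mp h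
        have hcM : c ∈ M := hM₀sub (hNzsub h'.1)
        have hcI : c ∈ insert z X :=
          hXz.2 z (Finset.mem_insert_self _ _) c hcM (ple_of_plt P h'.2)
        rcases Finset.mem_insert.mp hcI with hcz | hcX
        · rw [hcz] at h'
          exact absurd h'.2 (plt_irrefl P z)
        · exact ⟨hcX, h'.1⟩
      · exact ⟨h.1, hM''Nz h.2⟩
  have interRel : ∀ X : Finset (Fin m), RelIdeal P M X → RelIdeal P M'' (X ∩ M'') := by
    intro X hX
    refine ⟨Finset.inter_subset_right, ?_⟩
    intro a ha c hc hle
    exact Finset.mem_inter.mpr ⟨hX.2 a (Finset.mem_inter.mp ha).1 c (hM''M hc) hle, hc⟩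
  set eps : Finset (Fin m) → ℝ := fun Y => g (insert z (Cw Y)) - g (Cw Y) with hepsdef
  have deltaTrace : ∀ X : Finset (Fin m), RelIdeal P M X → z ∉ X → RelIdeal P M (insert z X) →
      g (insert z X) - g X = eps (X ∩ M'') := by
    intro X h1 h2 h3
    have hY := interRel X h1
    have hCw := CwAdd _ hY
    apply deltaEq X (Cw (X ∩ M'')) ⟨h1, h2, h3⟩ hCw
    rw [traceX X h1 h2 h3, traceCw _ hY]
  -- epsilon satisfies the exchange relations on M''
  have Heps : ∀ Y j j', RelIdeal P M'' Y → j ∈ M'' → j' ∈ M'' → j ∉ Y → j' ∉ Y → j ≠ j' →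
      ¬ G.Adj j j' → RelIdeal P M'' (insert j Y) → RelIdeal P M'' (insert j' Y) →
      eps (insert j (insert j' Y)) + eps Y = eps (insert j Y) + eps (insert j' Y) := by
    intro Y j j' hY hj hj' hjY hj'Y hne' hnadj hYj hYj'
    set X := M.filter (fun b => P.lt b z ∨ (∃ y ∈ Y, P.le b y) ∨ P.lt b j ∨ P.lt b j')
      with hXdef
    have hXsubM : X ⊆ M := Finset.filter_subset _ _
    have hjM : j ∈ M := hM''M hj
    have hj'M : j' ∈ M := hM''M hj'
    have hXrel : RelIdeal P M X := by
      refine ⟨hXsubM, ?_⟩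
      intro a ha c hcM hle
      have ha' := (Finset.mem_filter.mp ha).2
      refine Finset.mem_filter.mpr ⟨hcM, ?_⟩
      rcases ha' with h | ⟨y, hy, hley⟩ | h | h
      · exact Or.inl (plt_of_le_of_lt P hle h)
      · exact Or.inr (Or.inl ⟨y, hy, ple_trans P hle hley⟩)
      · exact Or.inr (Or.inr (Or.inl (plt_of_le_of_lt P hle h)))
      · exact Or.inr (Or.inr (Or.inr (plt_of_le_of_lt P hle h)))
    have hzX : z ∉ X := by
      intro h
      rcases (Finset.mem_filter.mp h).2 with h' | ⟨y, hy, hley⟩ | h' | h'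
      · exact plt_irrefl P z h'
      · exact notle_zM'' y (hY.1 hy) hley
      · exact hzPmax j hjM h'
      · exact hzPmax j' hj'M h'
    have hjX : j ∉ X := by
      intro h
      rcases (Finset.mem_filter.mp h).2 with h' | ⟨y, hy, hley⟩ | h' | h'
      · exact (Finset.mem_filter.mp hj).2 h'
      · exact hjY (hY.2 y hy j hj hley)
      · exact plt_irrefl P j h'
      · have : j ∈ insert j' Y := hYj'.2 j' (Finset.mem_insert_self _ _) j hj (ple_of_plt P h')
        rcases Finset.mem_insert.mp this with h'' | h''
        · exact hne' h''
        · exact hjY h''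
    have hj'X : j' ∉ X := by
      intro h
      rcases (Finset.mem_filter.mp h).2 with h' | ⟨y, hy, hley⟩ | h' | h'
      · exact (Finset.mem_filter.mp hj').2 h'
      · exact hj'Y (hY.2 y hy j' hj' hley)
      · have : j' ∈ insert j Y := hYj.2 j (Finset.mem_insert_self _ _) j' hj' (ple_of_plt P h')
        rcases Finset.mem_insert.mp this with h'' | h''
        · exact hne' h''.symm
        · exact hj'Y h''
      · exact plt_irrefl P j' h'
    have hzj : z ≠ j := by
      rintro rfl
      exact zNotNz (hM''Nz hj)
    have hzj' : z ≠ j' := by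
      rintro rfl
      exact zNotNz (hM''Nz hj')
    have hdownz : ∀ c ∈ M, P.le c z → c ≠ z → c ∈ X := fun c hc hle hne'' =>
      Finset.mem_filter.mpr ⟨hc, Or.inl (plt_of_le_ne P hle hne'')⟩
    have hdownj : ∀ c ∈ M, P.le c j → c ≠ j → c ∈ X := fun c hc hle hne'' =>
      Finset.mem_filter.mpr ⟨hc, Or.inr (Or.inr (Or.inl (plt_of_le_ne P hle hne'')))⟩
    have hdownj' : ∀ c ∈ M, P.le c j' → c ≠ j' → c ∈ X := fun c hc hle hne'' =>
      Finset.mem_filter.mpr ⟨hc, Or.inr (Or.inr (Or.inr (plt_of_le_ne P hle hne'')))⟩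
    have hXjrel : RelIdeal P M (insert j X) := relIdeal_insert P hXrel hjM hdownj
    have hXj'rel : RelIdeal P M (insert j' X) := relIdeal_insert P hXrel hj'M hdownj'
    have hXjj'rel : RelIdeal P M (insert j (insert j' X)) :=
      relIdeal_insert P hXj'rel hjM
        (fun c hc hle hne'' => Finset.mem_insert_of_mem (hdownj c hc hle hne''))
    have hzXins : RelIdeal P M (insert z X) := relIdeal_insert P hXrel hzM hdownz
    have hzXjins : RelIdeal P M (insert z (insert j X)) :=
      relIdeal_insert P hXjrel hzM
        (fun c hc hle hne'' => Finset.mem_insert_of_mem (hdownz c hc hle hne''))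
    have hzXj'ins : RelIdeal P M (insert z (insert j' X)) :=
      relIdeal_insert P hXj'rel hzM
        (fun c hc hle hne'' => Finset.mem_insert_of_mem (hdownz c hc hle hne''))
    have hzXjj'ins : RelIdeal P M (insert z (insert j (insert j' X))) :=
      relIdeal_insert P hXjj'rel hzM
        (fun c hc hle hne'' =>
          Finset.mem_insert_of_mem (Finset.mem_insert_of_mem (hdownz c hc hle hne'')))
    have trX : X ∩ M'' = Y := by
      ext c
      simp only [Finset.mem_inter]
      constructor
      · rintro ⟨hcX, hcM''⟩
        rcases (Finset.mem_filter.mp hcX).2 with h | ⟨y, hy, hle⟩ | h | h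
        · exact absurd h (Finset.mem_filter.mp hcM'').2
        · exact hY.2 y hy c hcM'' hle
        · have hmem : c ∈ insert j Y :=
            hYj.2 j (Finset.mem_insert_self _ _) c hcM'' (ple_of_plt P h)
          rcases Finset.mem_insert.mp hmem with h'' | h''
          · rw [h''] at h
            exact absurd h (plt_irrefl P j)
          · exact h''
        · have hmem : c ∈ insert j' Y :=
            hYj'.2 j' (Finset.mem_insert_self _ _) c hcM'' (ple_of_plt P h)
          rcases Finset.mem_insert.mp hmem with h'' | h''
          · rw [h''] at h
            exact absurd h (plt_irrefl P j')
          · exact h''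
      · intro hcY
        exact ⟨Finset.mem_filter.mpr ⟨hM''M (hY.1 hcY),
          Or.inr (Or.inl ⟨c, hcY, ple_refl P c⟩)⟩, hY.1 hcY⟩
    have trXj : insert j X ∩ M'' = insert j Y := by
      rw [Finset.insert_inter_of_mem hj, trX]
    have trXj' : insert j' X ∩ M'' = insert j' Y := by
      rw [Finset.insert_inter_of_mem hj', trX]
    have trXjj' : insert j (insert j' X) ∩ M'' = insert j (insert j' Y) := by
      rw [Finset.insert_inter_of_mem hj, trXj']
    have hjzX : j ∉ insert z X := by
      intro h
      rcases Finset.mem_insert.mp h with h' | h'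
      · exact hzj h'.symm
      · exact hjX h'
    have hj'zX : j' ∉ insert z X := by
      intro h
      rcases Finset.mem_insert.mp h with h' | h'
      · exact hzj' h'.symm
      · exact hj'X h'
    have hjXj' : j ∉ insert j' X := by
      intro h
      rcases Finset.mem_insert.mp h with h' | h'
      · exact hne' h'
      · exact hjX h'
    have hzXj : z ∉ insert j X := by
      intro h
      rcases Finset.mem_insert.mp h with h' | h'
      · exact hzj h'
      · exact hzX h'
    have hzXj' : z ∉ insert j' X := by
      intro h
      rcases Finset.mem_insert.mp h with h' | h'
      · exact hzj' h'
      · exact hzX h'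
    have hzXjj' : z ∉ insert j (insert j' X) := by
      intro h
      rcases Finset.mem_insert.mp h with h' | h'
      · exact hzj h'
      · exact hzXj' h'
    have d0 := deltaTrace X hXrel hzX hzXins
    have dj := deltaTrace (insert j X) hXjrel hzXj hzXjins
    have dj' := deltaTrace (insert j' X) hXj'rel hzXj' hzXj'ins
    have djj' := deltaTrace (insert j (insert j' X)) hXjj'rel hzXjj' hzXjj'ins
    rw [trX] at d0
    rw [trXj] at dj
    rw [trXj'] at dj'
    rw [trXjj'] at djj'
    have E1 := H X j j' hXrel hjM hj'M hjX hj'X hne' hnadj hXjrel hXj'rel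
    have E2 := H (insert z X) j j' hzXins hjM hj'M hjzX hj'zX hne' hnadj
      (by rw [Finset.insert_comm]; exact hzXjins)
      (by rw [Finset.insert_comm]; exact hzXj'ins)
    rw [Finset.insert_comm j' z X, Finset.insert_comm j z (insert j' X),
      Finset.insert_comm j z X] at E2
    linarith [E1, E2, d0, dj, dj', djj']
  -- apply the induction hypothesis to M''
  have hM''ssub : M'' ⊂ M := by
    rw [Finset.ssubset_iff_of_subset hM''M]
    exact ⟨z, hzM, fun h => zNotNz (hM''Nz h)⟩
  obtain ⟨k, ksupp, ksum⟩ := ih M'' hM''ssub eps Heps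
  refine ⟨fun B => if z ∈ B then (if B.erase z ⊆ M'' then k (B.erase z) else 0) else h₀ B,
    ?_, ?_⟩
  · intro B hB
    show (if z ∈ B then (if B.erase z ⊆ M'' then k (B.erase z) else 0) else h₀ B) = 0
    by_cases hzB : z ∈ B
    · rw [if_pos hzB]
      by_cases hBM'' : B.erase z ⊆ M''
      · rw [if_pos hBM'']
        by_contra hk
        have hprop : G.IsClique ((B.erase z : Finset (Fin m)) : Set (Fin m)) ∧
            B.erase z ⊆ M'' := by
          by_contra hq
          exact hk (ksupp _ hq)
        apply hB
        constructor
        · have hBi : B = insert z (B.erase z) := (Finset.insert_erase hzB).symm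
          rw [hBi, Finset.coe_insert]
          apply SimpleGraph.IsClique.insert hprop.1
          intro b hb _
          have hbNz : b ∈ Nz := hM''Nz (hprop.2 (Finset.mem_coe.mp hb))
          exact (Finset.mem_filter.mp hbNz).2
        · intro b hb
          by_cases hbz : b = z
          · rw [hbz]; exact hzM
          · exact hM''M (hprop.2 (Finset.mem_erase.mpr ⟨hbz, hb⟩))
      · rw [if_neg hBM'']
    · rw [if_neg hzB]
      apply h₀supp
      intro hq
      exact hB ⟨hq.1, hq.2.trans hM₀sub⟩
  · intro A hA
    show g A = ∑ B ∈ A.powerset,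
      (if z ∈ B then (if B.erase z ⊆ M'' then k (B.erase z) else 0) else h₀ B)
    by_cases hzA : z ∈ A
    swap
    · have hAM₀ : A ⊆ M₀ := fun a ha =>
        Finset.mem_erase.mpr ⟨fun h => hzA (h ▸ ha), hA.1 ha⟩
      have hgs := h₀sum A ((relI A hAM₀).mpr hA)
      rw [hgs]
      apply Finset.sum_congr rfl
      intro B hB
      have hzB : z ∉ B := fun h => hzA (Finset.mem_powerset.mp hB h)
      rw [if_neg hzB]
    · have hzX : z ∉ A.erase z := Finset.notMem_erase _ _
      have hinsX : insert z (A.erase z) = A := Finset.insert_erase hzA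
      have hXrel : RelIdeal P M (A.erase z) := by
        refine ⟨fun a ha => hA.1 (Finset.erase_subset _ _ ha), ?_⟩
        intro a ha c hcM hle
        have haA : a ∈ A := Finset.erase_subset _ _ ha
        refine Finset.mem_erase.mpr ⟨?_, hA.2 a haA c hcM hle⟩
        intro hcz
        have hlez : P.le z a := by rw [← hcz]; exact hle
        exact hzPmax a (hA.1 haA)
          (plt_of_le_ne P hlez ((Finset.mem_erase.mp ha).1).symm)
      have hdelta := deltaTrace (A.erase z) hXrel hzX (by rw [hinsX]; exact hA)
      rw [hinsX] at hdelta
      have hXM₀ : A.erase z ⊆ M₀ := fun a ha =>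
        Finset.mem_erase.mpr ⟨(Finset.mem_erase.mp ha).1, hA.1 (Finset.erase_subset _ _ ha)⟩
      have hgX := h₀sum (A.erase z) ((relI _ hXM₀).mpr hXrel)
      have hepsX := ksum (A.erase z ∩ M'') (interRel _ hXrel)
      have hsplit : (∑ B ∈ A.powerset,
          (if z ∈ B then (if B.erase z ⊆ M'' then k (B.erase z) else 0) else h₀ B))
          = (∑ B ∈ (A.erase z).powerset, h₀ B)
            + ∑ B ∈ (A.erase z ∩ M'').powerset, k B := by
        conv_lhs => rw [← hinsX, Finset.sum_powerset_insert hzX]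
        congr 1
        · apply Finset.sum_congr rfl
          intro B hB
          have hzB : z ∉ B := fun h => hzX (Finset.mem_powerset.mp hB h)
          rw [if_neg hzB]
        · have hterm : ∀ B ∈ (A.erase z).powerset,
              (if z ∈ insert z B then
                (if (insert z B).erase z ⊆ M'' then k ((insert z B).erase z) else 0)
              else h₀ (insert z B))
              = (if B ⊆ M'' then k B else 0) := by
            intro B hB
            have hzB : z ∉ B := fun h => hzX (Finset.mem_powerset.mp hB h)
            rw [if_pos (Finset.mem_insert_self _ _), Finset.erase_insert hzB]
          rw [Finset.sum_congr rfl hterm, ← Finset.sum_filter]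
          congr 1
          ext B
          simp only [Finset.mem_filter, Finset.mem_powerset, Finset.subset_inter_iff]
      rw [hsplit, ← hgX, ← hepsX]
      linarith [hdelta]

/-- From a strict relation `s < t` with `t ∈ T`, `s ∉ T`, find a violated cover pair. -/
lemma chain_cover {m : ℕ} (P : PartialOrder (Fin m)) (T : Finset (Fin m)) :
    ∀ n : ℕ, ∀ s t : Fin m, rankf P t - rankf P s ≤ n → P.lt s t → t ∈ T → s ∉ T →
      ∃ u v : Fin m, Covers P v u ∧ v ∈ T ∧ u ∉ T := by
  intro n
  induction n with
  | zero =>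
    intro s t hc hlt _ _
    have := rankf_strict P hlt
    omega
  | succ n ihn =>
    intro s t hc hlt htT hsT
    by_cases hex : ∃ r, P.lt s r ∧ P.lt r t
    · obtain ⟨r, h1, h2⟩ := hex
      have hr1 := rankf_strict P h1
      have hr2 := rankf_strict P h2
      by_cases hrT : r ∈ T
      · exact ihn s r (by omega) h1 hrT hsT
      · exact ihn r t (by omega) h2 htT hrT
    · push_neg at hex
      exact ⟨s, t, ⟨hlt, fun r hr => (hex r hr.1) hr.2⟩, htT, hsT⟩

/-- Cover relations of `P` must be edges of `G`. -/
lemma cover_adj {m : ℕ} (P : PartialOrder (Fin m)) (G : SimpleGraph (Fin m))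
    (p : Finset (Fin m) → ℝ)
    (hpos : ∀ A : Finset (Fin m), (∀ t ∈ A, ∀ s, P.le s t → s ∈ A) → 0 < p A)
    (hzero : ∀ A : Finset (Fin m), ¬ (∀ t ∈ A, ∀ s, P.le s t → s ∈ A) → p A = 0)
    (hpw : PairwiseMarkov G p) :
    ∀ i j, Covers P i j → G.Adj i j := by
  intro i j hcov
  by_contra hadj
  have hji : P.lt j i := hcov.1
  have hij : i ≠ j := fun h => pne_of_plt P hji h.symm
  set C := Finset.univ.filter (fun s => P.le s i ∧ s ≠ i ∧ s ≠ j) with hC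
  have hiC : i ∉ C := by simp [hC]
  have hjC : j ∉ C := by simp [hC]
  have hmkv := hpw i j hij hadj C hiC hjC
  have hCpos : 0 < p C := by
    apply hpos
    intro t ht s hle
    have ht' := (Finset.mem_filter.mp ht).2
    refine Finset.mem_filter.mpr ⟨Finset.mem_univ s, ple_trans P hle ht'.1, ?_, ?_⟩
    · intro hsi
      rw [hsi] at hle
      exact ht'.2.1 (P.le_antisymm _ _ ht'.1 hle)
    · intro hsj
      rw [hsj] at hle
      exact hcov.2 t ⟨plt_of_le_ne P hle (Ne.symm ht'.2.2), plt_of_le_ne P ht'.1 ht'.2.1⟩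
  have hCij : C ∪ {i, j} = Finset.univ.filter (fun s => P.le s i) := by
    ext a
    constructor
    · intro ha
      rcases Finset.mem_union.mp ha with h | h
      · exact Finset.mem_filter.mpr ⟨Finset.mem_univ a, (Finset.mem_filter.mp h).2.1⟩
      · rcases Finset.mem_insert.mp h with h' | h'
        · rw [h']; exact Finset.mem_filter.mpr ⟨Finset.mem_univ i, ple_refl P i⟩
        · rw [Finset.mem_singleton.mp h']
          exact Finset.mem_filter.mpr ⟨Finset.mem_univ j, ple_of_plt P hji⟩
    · intro ha
      have ha' := (Finset.mem_filter.mp ha).2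
      by_cases h1 : a = i
      · exact Finset.mem_union.mpr (Or.inr (Finset.mem_insert.mpr (Or.inl h1)))
      · by_cases h2 : a = j
        · exact Finset.mem_union.mpr (Or.inr (Finset.mem_insert.mpr
            (Or.inr (Finset.mem_singleton.mpr h2))))
        · exact Finset.mem_union.mpr (Or.inl (Finset.mem_filter.mpr
            ⟨Finset.mem_univ a, ha', h1, h2⟩))
  have hCijpos : 0 < p (C ∪ {i, j}) := by
    rw [hCij]
    apply hpos
    intro t ht s hle
    exact Finset.mem_filter.mpr ⟨Finset.mem_univ s,
      ple_trans P hle (Finset.mem_filter.mp ht).2⟩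
  have hCi0 : p (C ∪ {i}) = 0 := by
    apply hzero
    intro hid
    have hiI : i ∈ C ∪ {i} := Finset.mem_union.mpr (Or.inr (Finset.mem_singleton.mpr rfl))
    have hjI := hid i hiI j (ple_of_plt P hji)
    rcases Finset.mem_union.mp hjI with h | h
    · exact hjC h
    · exact hij (Finset.mem_singleton.mp h).symm
  rw [hCi0, zero_mul] at hmkv
  exact (mul_pos hCpos hCijpos).ne' hmkv

/-- Existence of a maximal clique over a clique. -/
lemma maxclique_exists {m : ℕ} (G : SimpleGraph (Fin m)) (B : Finset (Fin m))
    (hB : G.IsClique (B : Set (Fin m))) : ∃ S, IsMaxClique G S ∧ B ⊆ S := by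
  obtain ⟨S, hSmem, hSmax⟩ := Finset.exists_max_image
    (Finset.univ.powerset.filter (fun S : Finset (Fin m) => G.IsClique (S : Set (Fin m)) ∧ B ⊆ S))
    Finset.card ⟨B, by simp [hB]⟩
  have hS := (Finset.mem_filter.mp hSmem).2
  refine ⟨S, ⟨hS.1, ?_⟩, hS.2⟩
  intro T hT hST
  have hTmem : T ∈ Finset.univ.powerset.filter
      (fun S : Finset (Fin m) => G.IsClique (S : Set (Fin m)) ∧ B ⊆ S) :=
    Finset.mem_filter.mpr ⟨Finset.mem_powerset.mpr (Finset.subset_univ T), hT, hS.2.trans hST⟩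
  exact (Finset.eq_of_subset_of_card_le hST (hSmax T hTmem)).symm

/-- A chosen maximal clique containing a given clique. -/
def maxCliqueOver {m : ℕ} (G : SimpleGraph (Fin m)) (B : Finset (Fin m)) : Finset (Fin m) :=
  if hB : G.IsClique (B : Set (Fin m)) then (maxclique_exists G B hB).choose else ∅

lemma maxCliqueOver_max {m : ℕ} (G : SimpleGraph (Fin m)) (B : Finset (Fin m))
    (hB : G.IsClique (B : Set (Fin m))) : IsMaxClique G (maxCliqueOver G B) := by
  rw [maxCliqueOver, dif_pos hB]
  exact (maxclique_exists G B hB).choose_spec.1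

lemma maxCliqueOver_subset {m : ℕ} (G : SimpleGraph (Fin m)) (B : Finset (Fin m))
    (hB : G.IsClique (B : Set (Fin m))) : B ⊆ maxCliqueOver G B := by
  rw [maxCliqueOver, dif_pos hB]
  exact (maxclique_exists G B hB).choose_spec.2


/-- The natural-lattice-supported Hammersley–Clifford theorem: if the support of the
probability distribution `p` is the natural distributive lattice `L = J(P)` and `p`
satisfies the pairwise Markov statements of `G`, then `p` factors according to `G`. -/
theorem natural_lattice_hammersley_clifford
    (m : ℕ) (P : PartialOrder (Fin m)) (G : SimpleGraph (Fin m))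
    (p : Finset (Fin m) → ℝ)
    (hnonneg : ∀ S, 0 ≤ p S)
    (hsum : ∑ S : Finset (Fin m), p S = 1)
    (hsupp : {S : Finset (Fin m) | 0 < p S} = orderIdeals P)
    (hpw : PairwiseMarkov G p) :
    FactorsAccording G p := by
  have hpos : ∀ A : Finset (Fin m), (∀ t ∈ A, ∀ s, P.le s t → s ∈ A) → 0 < p A := by
    intro A hA
    exact (Set.ext_iff.mp hsupp A).mpr hA
  have hzero : ∀ A : Finset (Fin m), ¬ (∀ t ∈ A, ∀ s, P.le s t → s ∈ A) → p A = 0 := by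
    intro A hA
    have h1 : ¬ (0 < p A) := fun h => hA ((Set.ext_iff.mp hsupp A).mp h)
    exact le_antisymm (not_lt.mp h1) (hnonneg A)
  have H : ∀ A j j', RelIdeal P Finset.univ A → j ∈ Finset.univ → j' ∈ Finset.univ →
      j ∉ A → j' ∉ A → j ≠ j' → ¬ G.Adj j j' →
      RelIdeal P Finset.univ (insert j A) → RelIdeal P Finset.univ (insert j' A) →
      Real.log (p (insert j (insert j' A))) + Real.log (p A)
        = Real.log (p (insert j A)) + Real.log (p (insert j' A)) := by
    intro A j j' hA _ _ hjA hj'A hnejj hnadj hAj hAj'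
    have hid : ∀ t ∈ A, ∀ s, P.le s t → s ∈ A :=
      fun t ht s hs => hA.2 t ht s (Finset.mem_univ s) hs
    have hidj : ∀ t ∈ insert j A, ∀ s, P.le s t → s ∈ insert j A :=
      fun t ht s hs => hAj.2 t ht s (Finset.mem_univ s) hs
    have hidj' : ∀ t ∈ insert j' A, ∀ s, P.le s t → s ∈ insert j' A :=
      fun t ht s hs => hAj'.2 t ht s (Finset.mem_univ s) hs
    have huni : insert j A ∪ insert j' A = insert j (insert j' A) := by
      ext a; simp only [Finset.mem_union, Finset.mem_insert]; tauto
    have hrel : RelIdeal P Finset.univ (insert j (insert j' A)) := by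
      rw [← huni]; exact relIdeal_union P hAj hAj'
    have hidjj' : ∀ t ∈ insert j (insert j' A), ∀ s, P.le s t → s ∈ insert j (insert j' A) :=
      fun t ht s hs => hrel.2 t ht s (Finset.mem_univ s) hs
    have p0 := hpos A hid
    have pj := hpos _ hidj
    have pj' := hpos _ hidj'
    have pjj' := hpos _ hidjj'
    have hmkv := hpw j j' hnejj hnadj A hjA hj'A
    have hpair : A ∪ {j, j'} = insert j (insert j' A) := by
      ext a
      simp only [Finset.mem_union, Finset.mem_insert, Finset.mem_singleton]
      tauto
    have hsj : A ∪ {j} = insert j A := by ext x; simp [or_comm]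
    have hsj' : A ∪ {j'} = insert j' A := by ext x; simp [or_comm]
    rw [hpair, hsj, hsj'] at hmkv
    rw [← Real.log_mul pjj'.ne' p0.ne', ← Real.log_mul pj.ne' pj'.ne',
      mul_comm (p (insert j (insert j' A))) (p A), hmkv]
  obtain ⟨h, hclq, hdec⟩ := lemmaC P G Finset.univ (fun A => Real.log (p A)) H
  have pexp : ∀ A : Finset (Fin m), (∀ t ∈ A, ∀ s, P.le s t → s ∈ A) →
      p A = Real.exp (∑ B ∈ A.powerset, h B) := by
    intro A hA
    have hrel : RelIdeal P Finset.univ A :=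
      ⟨Finset.subset_univ A, fun a ha b _ hle => hA a ha b hle⟩
    have hgA : Real.log (p A) = ∑ B ∈ A.powerset, h B := hdec A hrel
    rw [← hgA]
    exact (Real.exp_log (hpos A hA)).symm
  refine ⟨fun S T' =>
    (∏ e ∈ (Finset.univ ×ˢ Finset.univ).filter
        (fun e : Fin m × Fin m => Covers P e.1 e.2 ∧ maxCliqueOver G {e.1, e.2} = S),
      (if e.1 ∈ T' ∧ e.2 ∉ T' then (0:ℝ) else 1))
    * Real.exp (∑ B ∈ Finset.univ.powerset.filter
        (fun B : Finset (Fin m) =>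
          G.IsClique (B : Set (Fin m)) ∧ maxCliqueOver G B = S ∧ B ⊆ T'), h B),
    1, one_pos, ?_, ?_⟩
  · intro S T'
    apply mul_nonneg
    · apply Finset.prod_nonneg
      intro e _
      by_cases hc : e.1 ∈ T' ∧ e.2 ∉ T'
      · rw [if_pos hc]
      · rw [if_neg hc]; norm_num
    · exact (Real.exp_pos _).le
  · intro T
    show p T = (1 / 1) * ∏ S ∈ Finset.univ.filter (fun S => IsMaxClique G S),
      ((∏ e ∈ (Finset.univ ×ˢ Finset.univ).filter
          (fun e : Fin m × Fin m => Covers P e.1 e.2 ∧ maxCliqueOver G {e.1, e.2} = S),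
        (if e.1 ∈ S ∩ T ∧ e.2 ∉ S ∩ T then (0:ℝ) else 1))
      * Real.exp (∑ B ∈ Finset.univ.powerset.filter
          (fun B : Finset (Fin m) =>
            G.IsClique (B : Set (Fin m)) ∧ maxCliqueOver G B = S ∧ B ⊆ S ∩ T), h B))
    rw [show (1:ℝ)/1 = 1 by norm_num, one_mul]
    by_cases hT : ∀ t ∈ T, ∀ s, P.le s t → s ∈ T
    · -- ideal case
      rw [Finset.prod_mul_distrib]
      have hind : ∀ S ∈ Finset.univ.filter (fun S => IsMaxClique G S),
          (∏ e ∈ (Finset.univ ×ˢ Finset.univ).filter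
            (fun e : Fin m × Fin m => Covers P e.1 e.2 ∧ maxCliqueOver G {e.1, e.2} = S),
            (if e.1 ∈ S ∩ T ∧ e.2 ∉ S ∩ T then (0:ℝ) else 1)) = 1 := by
        intro S _
        apply Finset.prod_eq_one
        intro e he
        rw [if_neg]
        rintro ⟨h1, h2⟩
        have hcov := (Finset.mem_filter.mp he).2
        have hadj : G.Adj e.1 e.2 := cover_adj P G p hpos hzero hpw e.1 e.2 hcov.1
        have hclq2 : G.IsClique (({e.1, e.2} : Finset (Fin m)) : Set (Fin m)) := by
          rw [Finset.coe_pair]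
          exact SimpleGraph.isClique_pair.mpr (fun _ => hadj)
        have hsubS : ({e.1, e.2} : Finset (Fin m)) ⊆ S := by
          rw [← hcov.2]
          exact maxCliqueOver_subset G _ hclq2
        have h2T : e.2 ∈ T := hT e.1 (Finset.mem_inter.mp h1).2 e.2 (ple_of_plt P hcov.1.1)
        exact h2 (Finset.mem_inter.mpr ⟨hsubS (by simp), h2T⟩)
      rw [Finset.prod_eq_one hind, one_mul, ← Real.exp_sum]
      have hsw : (∑ S ∈ Finset.univ.filter (fun S => IsMaxClique G S),
          ∑ B ∈ Finset.univ.powerset.filter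
            (fun B : Finset (Fin m) =>
              G.IsClique (B : Set (Fin m)) ∧ maxCliqueOver G B = S ∧ B ⊆ S ∩ T), h B)
          = ∑ B ∈ T.powerset, h B := by
        have e1 : ∀ S ∈ Finset.univ.filter (fun S => IsMaxClique G S),
            (∑ B ∈ Finset.univ.powerset.filter
              (fun B : Finset (Fin m) =>
                G.IsClique (B : Set (Fin m)) ∧ maxCliqueOver G B = S ∧ B ⊆ S ∩ T), h B)
            = ∑ B ∈ Finset.univ.powerset,
                if (G.IsClique (B : Set (Fin m)) ∧ maxCliqueOver G B = S ∧ B ⊆ S ∩ T)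
                then h B else 0 :=
          fun S _ => Finset.sum_filter _ _
        rw [Finset.sum_congr rfl e1, Finset.sum_comm]
        have e2 : ∀ B ∈ Finset.univ.powerset,
            (∑ S ∈ Finset.univ.filter (fun S => IsMaxClique G S),
              if (G.IsClique (B : Set (Fin m)) ∧ maxCliqueOver G B = S ∧ B ⊆ S ∩ T)
              then h B else 0)
            = if B ⊆ T then h B else 0 := by
          intro B _
          by_cases hBc : G.IsClique (B : Set (Fin m))
          · rw [Finset.sum_eq_single (maxCliqueOver G B)
              (fun S _ hSne => by
                rw [if_neg]
                rintro ⟨-, hq, -⟩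
                exact hSne hq.symm)
              (fun hnot => absurd (Finset.mem_filter.mpr
                ⟨Finset.mem_univ _, maxCliqueOver_max G B hBc⟩) hnot)]
            by_cases hBT : B ⊆ T
            · rw [if_pos ⟨hBc, rfl, Finset.subset_inter (maxCliqueOver_subset G B hBc) hBT⟩,
                if_pos hBT]
            · rw [if_neg, if_neg hBT]
              rintro ⟨-, -, hsub⟩
              exact hBT (hsub.trans Finset.inter_subset_right)
          · have hz0 : h B = 0 := hclq B (fun hq => hBc hq.1)
            have hzz : (∑ S ∈ Finset.univ.filter (fun S => IsMaxClique G S),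
                if (G.IsClique (B : Set (Fin m)) ∧ maxCliqueOver G B = S ∧ B ⊆ S ∩ T)
                then h B else 0) = 0 := by
              apply Finset.sum_eq_zero
              intro S _
              rw [if_neg]
              rintro ⟨hq, -⟩
              exact hBc hq
            rw [hzz]
            by_cases hBT : B ⊆ T
            · rw [if_pos hBT, hz0]
            · rw [if_neg hBT]
        rw [Finset.sum_congr rfl e2, ← Finset.sum_filter]
        congr 1
        ext B
        simp [Finset.mem_powerset]
      rw [hsw]
      exact pexp T hT
    · -- non-ideal case
      have hpT : p T = 0 := hzero T hT
      push_neg at hT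
      obtain ⟨t, htT, s, hle, hsT⟩ := hT
      have hst : P.lt s t := plt_of_le_ne P hle (fun hq => hsT (hq ▸ htT))
      obtain ⟨u, v, hcov, hvT, huT⟩ :=
        chain_cover P T (rankf P t - rankf P s) s t le_rfl hst htT hsT
      have hadj := cover_adj P G p hpos hzero hpw v u hcov
      have hclq2 : G.IsClique (({v, u} : Finset (Fin m)) : Set (Fin m)) := by
        rw [Finset.coe_pair]
        exact SimpleGraph.isClique_pair.mpr (fun _ => hadj)
      have hS0max : IsMaxClique G (maxCliqueOver G {v, u}) := maxCliqueOver_max G _ hclq2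
      have hsub0 : ({v, u} : Finset (Fin m)) ⊆ maxCliqueOver G {v, u} :=
        maxCliqueOver_subset G _ hclq2
      rw [hpT]
      have hfac : (∏ e ∈ (Finset.univ ×ˢ Finset.univ).filter (fun e : Fin m × Fin m =>
          Covers P e.1 e.2 ∧ maxCliqueOver G {e.1, e.2} = maxCliqueOver G {v, u}),
          (if e.1 ∈ maxCliqueOver G {v, u} ∩ T ∧ e.2 ∉ maxCliqueOver G {v, u} ∩ T
          then (0:ℝ) else 1)) = 0 := by
        apply Finset.prod_eq_zero (i := ((v, u) : Fin m × Fin m))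
        · exact Finset.mem_filter.mpr
            ⟨Finset.mem_product.mpr ⟨Finset.mem_univ _, Finset.mem_univ _⟩, hcov, rfl⟩
        · rw [if_pos]
          exact ⟨Finset.mem_inter.mpr ⟨hsub0 (by simp), hvT⟩,
            fun hq => huT (Finset.mem_inter.mp hq).2⟩
      have hz2 : (∏ S ∈ Finset.univ.filter (fun S => IsMaxClique G S),
          ((∏ e ∈ (Finset.univ ×ˢ Finset.univ).filter
              (fun e : Fin m × Fin m => Covers P e.1 e.2 ∧ maxCliqueOver G {e.1, e.2} = S),
            (if e.1 ∈ S ∩ T ∧ e.2 ∉ S ∩ T then (0:ℝ) else 1))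
          * Real.exp (∑ B ∈ Finset.univ.powerset.filter
              (fun B : Finset (Fin m) =>
                G.IsClique (B : Set (Fin m)) ∧ maxCliqueOver G B = S ∧ B ⊆ S ∩ T), h B)))
          = 0 := by
        apply Finset.prod_eq_zero (Finset.mem_filter.mpr ⟨Finset.mem_univ _, hS0max⟩)
        rw [hfac, zero_mul]
      rw [hz2]

end
end

section
/- Let A ∈ ℕ^{d×r} be a matrix of nonnegative integers and let S ⊆ [r] be a facial subset for A. Let x ∈ ℝ^r satisfy x_j > 0 for j ∈ S and x_j = 0 for j ∉ S. Then x satisfies ∏_{j=1}^r x_j^{u_j} = ∏_{j=1}^r x_j^{v_j} for all u, v ∈ ℕ^r with Au = Av (i.e., x ∈ V(I_A)) if and only if there exists θ ∈ ℝ^d with θ_i > 0 for all i such that x_j = ∏_{i=1}^d θ_i^{a_{ij}} for every j ∈ S. -/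
open scoped BigOperators
open Matrix
open scoped RealInnerProductSpace

noncomputable section

/-- Rational vectors that are linearly independent over `ℚ` remain linearly independent
over `ℝ` after coordinatewise cast. (Gram-determinant argument.) -/
lemma linearIndependent_ratCast {n : ℕ} {ι : Type*} [Fintype ι] [DecidableEq ι]
    {v : ι → Fin n → ℚ} (hv : LinearIndependent ℚ v) :
    LinearIndependent ℝ (fun i => fun j => ((v i j : ℚ) : ℝ)) := by
  classical
  set G : Matrix ι ι ℚ := Matrix.of fun i l => ∑ j, v i j * v l j with hG
  have hdet : G.det ≠ 0 := by
    intro h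
    obtain ⟨q, hq0, hq⟩ := Matrix.exists_mulVec_eq_zero_iff.mpr h
    have h1 : ∑ j, (∑ i, q i * v i j) ^ 2 = 0 := by
      have expand : ∑ j, (∑ i, q i * v i j) ^ 2 = ∑ i, q i * (G *ᵥ q) i := by
        simp only [pow_two, Finset.sum_mul_sum, Matrix.mulVec, dotProduct, hG,
          Matrix.of_apply, Finset.mul_sum, Finset.sum_mul]
        rw [Finset.sum_comm]
        refine Finset.sum_congr rfl fun i _ => ?_
        rw [Finset.sum_comm]
        refine Finset.sum_congr rfl fun l _ => ?_
        refine Finset.sum_congr rfl fun j _ => ?_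
        ring
      rw [expand, hq]
      simp
    have h2 : ∀ j, ∑ i, q i * v i j = 0 := by
      intro j
      have := (Finset.sum_eq_zero_iff_of_nonneg (fun j _ => sq_nonneg _)).mp h1 j
        (Finset.mem_univ j)
      exact pow_eq_zero_iff two_ne_zero |>.mp this
    rw [Fintype.linearIndependent_iff] at hv
    refine hq0 (funext fun i => hv q ?_ i)
    funext j
    simpa [Finset.sum_apply] using h2 j
  rw [Fintype.linearIndependent_iff]
  intro c hc
  have hc' : ∀ j, ∑ i, c i * (v i j : ℝ) = 0 := by
    intro j
    have := congrFun hc j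
    simpa [Finset.sum_apply] using this
  have hGc : (G.map ((Rat.castHom ℝ : ℚ →+* ℝ) : ℚ → ℝ)) *ᵥ c = 0 := by
    funext i
    show ∑ l, ((G i l : ℚ) : ℝ) * c l = 0
    have : ∑ l, ((G i l : ℚ) : ℝ) * c l = ∑ j, (v i j : ℝ) * ∑ l, c l * (v l j : ℝ) := by
      simp only [hG, Matrix.of_apply]
      push_cast
      simp only [Finset.sum_mul, Finset.mul_sum]
      rw [Finset.sum_comm]
      refine Finset.sum_congr rfl fun l _ => Finset.sum_congr rfl fun j _ => by ring
    rw [this]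
    simp [hc']
  have hcz : c = 0 := by
    by_contra hc0
    have hdet' : (G.map ((Rat.castHom ℝ : ℚ →+* ℝ) : ℚ → ℝ)).det = 0 :=
      Matrix.exists_mulVec_eq_zero_iff.mp ⟨c, hc0, hGc⟩
    have hmap := RingHom.map_det (Rat.castHom ℝ) G
    rw [RingHom.mapMatrix_apply] at hmap
    rw [← hmap, Rat.coe_castHom] at hdet'
    exact hdet (by exact_mod_cast hdet')
  exact fun i => congrFun hcz i

/-- The rank of a rational matrix does not decrease when cast to `ℝ`. -/
lemma rank_le_rank_ratCast {m n : ℕ} (M : Matrix (Fin m) (Fin n) ℚ) :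
    M.rank ≤ (M.map ((↑) : ℚ → ℝ)).rank := by
  classical
  obtain ⟨s, hs_sub, hs_span, hs_ind⟩ := exists_linearIndependent ℚ (Set.range Mᵀ)
  have hsfin : s.Finite := (Set.finite_range Mᵀ).subset hs_sub
  haveI := hsfin.fintype
  have h1 : M.rank = s.toFinset.card := by
    rw [Matrix.rank_eq_finrank_span_cols, Matrix.col, ← hs_span, finrank_span_set_eq_card hs_ind]
  have hind : LinearIndependent ℝ (fun i : s => fun j => ((i.1 j : ℚ) : ℝ)) :=
    linearIndependent_ratCast hs_ind
  have h2 : Submodule.span ℝ (Set.range fun i : s => fun j => ((i.1 j : ℚ) : ℝ))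
      ≤ Submodule.span ℝ (Set.range (M.map ((↑) : ℚ → ℝ))ᵀ) := by
    rw [Submodule.span_le]
    rintro _ ⟨⟨w, hw⟩, rfl⟩
    obtain ⟨jdx, hj⟩ := hs_sub hw
    refine Submodule.subset_span ⟨jdx, ?_⟩
    funext l
    simp [Matrix.transpose_apply, Matrix.map_apply, ← hj]
  calc M.rank = s.toFinset.card := h1
    _ = Fintype.card s := s.toFinset_card
    _ = Module.finrank ℝ (Submodule.span ℝ (Set.range fun i : s => fun j => ((i.1 j : ℚ) : ℝ))) :=
        (finrank_span_eq_card hind).symm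
    _ ≤ Module.finrank ℝ (Submodule.span ℝ (Set.range (M.map ((↑) : ℚ → ℝ))ᵀ)) :=
        Submodule.finrank_mono h2
    _ = (M.map ((↑) : ℚ → ℝ)).rank := (Matrix.rank_eq_finrank_span_cols _).symm

/-- The real kernel of (the cast of) a rational matrix is spanned by the casts of the
rational kernel vectors. -/
lemma mem_span_ratKer {m n : ℕ} (M : Matrix (Fin m) (Fin n) ℚ) (z : Fin n → ℝ)
    (hz : (M.map ((↑) : ℚ → ℝ)) *ᵥ z = 0) :
    z ∈ Submodule.span ℝ ((fun q : Fin n → ℚ => fun j => ((q j : ℚ) : ℝ)) ''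
      (LinearMap.ker M.mulVecLin : Set (Fin n → ℚ))) := by
  classical
  set M' := M.map ((↑) : ℚ → ℝ) with hM'
  set Kq := LinearMap.ker M.mulVecLin with hKq
  set Kr := LinearMap.ker M'.mulVecLin with hKr
  set k := Module.finrank ℚ Kq with hk
  let b : Module.Basis (Fin k) ℚ Kq := Module.finBasis ℚ Kq
  set w : Fin k → Fin n → ℚ := fun i => (b i : Fin n → ℚ) with hw
  have hwind : LinearIndependent ℚ w :=
    b.linearIndependent.map' Kq.subtype (Submodule.ker_subtype Kq)
  set w' : Fin k → Fin n → ℝ := fun i => fun j => ((w i j : ℚ) : ℝ) with hw'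
  have hw'ind : LinearIndependent ℝ w' := linearIndependent_ratCast hwind
  set V := Submodule.span ℝ (Set.range w') with hV
  have hVK : V ≤ Kr := by
    rw [hV, Submodule.span_le]
    rintro _ ⟨i, rfl⟩
    have hbi : M *ᵥ w i = 0 := (b i).2
    show w' i ∈ Kr
    rw [hKr, LinearMap.mem_ker, Matrix.mulVecLin_apply]
    funext l
    have := congrFun hbi l
    simp only [Matrix.mulVec, dotProduct, Pi.zero_apply] at this ⊢
    have : ((∑ j, M l j * w i j : ℚ) : ℝ) = 0 := by rw [this]; norm_num
    push_cast at this
    simpa [hM', hw', Matrix.map_apply] using this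
  have hdimV : Module.finrank ℝ V = k := by
    rw [hV, finrank_span_eq_card hw'ind, Fintype.card_fin]
  have hrn1 : M.rank + k = n := by
    have := LinearMap.finrank_range_add_finrank_ker M.mulVecLin
    rwa [Module.finrank_fin_fun] at this
  have hrn2 : M'.rank + Module.finrank ℝ Kr = n := by
    have := LinearMap.finrank_range_add_finrank_ker M'.mulVecLin
    rwa [Module.finrank_fin_fun] at this
  have hrk := rank_le_rank_ratCast M
  rw [← hM'] at hrk
  have hdim : Module.finrank ℝ Kr ≤ Module.finrank ℝ V := by
    rw [hdimV]; omega
  have hVeq : V = Kr := Submodule.eq_of_le_of_finrank_le hVK hdim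
  have hzV : z ∈ V := by
    rw [hVeq, hKr, LinearMap.mem_ker, Matrix.mulVecLin_apply]; exact hz
  refine Submodule.span_mono ?_ hzV
  rintro _ ⟨i, rfl⟩
  exact ⟨w i, (b i).2, rfl⟩

/-- If `y` is orthogonal to the kernel of `B *ᵥ ·`, then `y` is in the row space of `B`. -/
lemma exists_vecMul_eq_of_forall_ker {m n : ℕ} (B : Matrix (Fin m) (Fin n) ℝ) (y : Fin n → ℝ)
    (h : ∀ z : Fin n → ℝ, B *ᵥ z = 0 → ∑ j, y j * z j = 0) :
    ∃ lam : Fin m → ℝ, lam ᵥ* B = y := by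
  classical
  let e : EuclideanSpace ℝ (Fin n) ≃ₗ[ℝ] (Fin n → ℝ) := WithLp.linearEquiv 2 ℝ (Fin n → ℝ)
  let T : (Fin m → ℝ) →ₗ[ℝ] EuclideanSpace ℝ (Fin n) :=
    e.symm.toLinearMap ∘ₗ B.vecMulLinear
  set R := LinearMap.range T with hR
  have hker : ∀ u : EuclideanSpace ℝ (Fin n), u ∈ Rᗮ → B *ᵥ (e u) = 0 := by
    intro u hu
    funext i
    have hw : T (Pi.single i 1) ∈ R := LinearMap.mem_range_self _ _
    have h0 := hu (T (Pi.single i 1)) hw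
    have hinner : (inner ℝ (T (Pi.single i 1)) u : ℝ) = ∑ j, B i j * (e u) j := by
      rw [PiLp.inner_apply]
      refine Finset.sum_congr rfl fun j _ => ?_
      have : (e (T (Pi.single i 1))) j = B i j := by
        show (Pi.single i 1 ᵥ* B) j = B i j
        rw [Matrix.single_one_vecMul]
        rfl
      simp only [RCLike.inner_apply, conj_trivial]
      show (e u) j * (e (T (Pi.single i 1))) j = B i j * (e u) j
      rw [this, mul_comm]
    rw [hinner] at h0
    simpa [Matrix.mulVec, dotProduct] using h0
  have hy : (e.symm y) ∈ Rᗮᗮ := by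
    rw [Submodule.mem_orthogonal]
    intro u hu
    have hBu := hker u hu
    have := h (e u) hBu
    rw [PiLp.inner_apply]
    simp only [RCLike.inner_apply, conj_trivial]
    have : ∑ j, (e u) j * y j = 0 := by
      rw [← this]; exact Finset.sum_congr rfl fun j _ => mul_comm _ _
    exact (Finset.sum_congr rfl fun j _ => mul_comm _ _).trans this
  rw [Submodule.orthogonal_orthogonal] at hy
  obtain ⟨lam, hlam⟩ := hy
  exact ⟨lam, by simpa [T, e] using congrArg e hlam⟩

/-- The support of the `j`-th column of `A`. -/
def colSupp {d r : ℕ} (A : Matrix (Fin d) (Fin r) ℕ) (j : Fin r) : Set (Fin d) :=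
  {i | A i j ≠ 0}

/-- `F` is `A`-feasible: for every column index `j ∉ F`, the support of column `j` is not
contained in the union of the supports of the columns indexed by `F`. -/
def AFeasible {d r : ℕ} (A : Matrix (Fin d) (Fin r) ℕ) (F : Set (Fin r)) : Prop :=
  ∀ j ∉ F, ¬ (colSupp A j ⊆ ⋃ k ∈ F, colSupp A k)

/-- `S` is facial for `A`: the columns indexed by `S` are exactly those lying on the face
of `cone(A)` cut out by some linear functional `c` that is nonnegative on all columns. -/
def IsFacial {d r : ℕ} (A : Matrix (Fin d) (Fin r) ℕ) (S : Set (Fin r)) : Prop :=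
  ∃ c : Fin d → ℝ, (∀ j, 0 ≤ ∑ i, c i * (A i j : ℝ)) ∧
    S = {j | ∑ i, c i * (A i j : ℝ) = 0}

/-- For a facial subset `S` and a point `x` with support exactly `S`, the point lies in
the real toric variety `V(I_A)` iff it can be written with strictly positive parameters
in the monomial parametrization given by `A`, on the coordinates in `S`. -/
theorem facial_toric_point_iff_positively_parametrized
    (d r : ℕ) (A : Matrix (Fin d) (Fin r) ℕ) (S : Set (Fin r))
    (hS : IsFacial A S) (x : Fin r → ℝ)
    (hpos : ∀ j ∈ S, 0 < x j) (hzero : ∀ j ∉ S, x j = 0) :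
    (∀ u v : Fin r → ℕ, A.mulVec u = A.mulVec v →
        ∏ j, x j ^ u j = ∏ j, x j ^ v j) ↔
      ∃ θ : Fin d → ℝ, (∀ i, 0 < θ i) ∧ ∀ j ∈ S, x j = ∏ i, θ i ^ A i j := by
  classical
  obtain ⟨c, hcn, hcS⟩ := hS
  have hgS : ∀ j, j ∈ S ↔ (∑ i, c i * (A i j : ℝ)) = 0 := by
    intro j; rw [hcS]; exact Iff.rfl
  constructor
  · -- forward direction
    intro H
    set Mq : Matrix (Fin d) (Fin r) ℚ :=
      Matrix.of fun i j => if j ∈ S then (A i j : ℚ) else 0 with hMq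
    set y : Fin r → ℝ := fun j => Real.log (x j) with hy
    have hyS : ∀ j, j ∉ S → y j = 0 := by
      intro j hj; rw [hy]; simp [hzero j hj]
    -- Step 1: the linear functional `z ↦ ∑ y j * z j` vanishes on casts of rational
    -- kernel vectors of `Mq`.
    have gen : ∀ q : Fin r → ℚ, Mq *ᵥ q = 0 → ∑ j, y j * (q j : ℝ) = 0 := by
      intro q hq
      have hMq0 : ∀ i, ∑ j, Mq i j * q j = 0 := by
        intro i
        have := congrFun hq i
        simpa [Matrix.mulVec, dotProduct] using this
      set N : ℕ := ∏ j, (q j).den with hN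
      have hNd : ∀ j, (q j).den ∣ N := fun j => Finset.dvd_prod_of_mem _ (Finset.mem_univ j)
      have hN0 : N ≠ 0 := Finset.prod_ne_zero_iff.mpr fun j _ => (q j).den_nz
      set Z : Fin r → ℤ := fun j => (q j).num * ((N / (q j).den : ℕ) : ℤ) with hZ
      have hZq : ∀ j, (Z j : ℚ) = q j * N := by
        intro j
        have hdd : ((q j).den : ℚ) * ((N / (q j).den : ℕ) : ℚ) = (N : ℚ) := by
          exact_mod_cast congrArg (fun t : ℕ => (t : ℚ)) (Nat.mul_div_cancel' (hNd j))
        calc (Z j : ℚ) = ((q j).num : ℚ) * ((N / (q j).den : ℕ) : ℚ) := by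
              rw [hZ]; rw [Int.cast_mul, Int.cast_natCast]
          _ = (q j * (q j).den) * ((N / (q j).den : ℕ) : ℚ) := by
              rw [Rat.mul_den_eq_num]
          _ = q j * (((q j).den : ℚ) * ((N / (q j).den : ℕ) : ℚ)) := by ring
          _ = q j * N := by rw [hdd]
      set u : Fin r → ℕ := fun j => if j ∈ S then (Z j).toNat else 0 with hu
      set v : Fin r → ℕ := fun j => if j ∈ S then (-Z j).toNat else 0 with hv
      have hZuv : ∀ j, j ∈ S → ((u j : ℤ) - (v j : ℤ) = Z j) := by
        intro j hj
        rw [hu, hv]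
        simp only [if_pos hj]
        omega
      have huv : A.mulVec u = A.mulVec v := by
        funext i
        have key : (∑ j, (A i j : ℚ) * (u j : ℚ)) = ∑ j, (A i j : ℚ) * (v j : ℚ) := by
          have e1 : ∑ j, (A i j : ℚ) * ((u j : ℚ) - (v j : ℚ)) = ∑ j, Mq i j * (Z j : ℚ) := by
            refine Finset.sum_congr rfl fun j _ => ?_
            by_cases hj : j ∈ S
            · have : ((u j : ℚ) - (v j : ℚ)) = (Z j : ℚ) := by
                exact_mod_cast congrArg (fun t : ℤ => (t : ℚ)) (hZuv j hj)
              rw [this, hMq]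
              simp [if_pos hj]
            · rw [hu, hv, hMq]
              simp [if_neg hj]
          have e2 : ∑ j, Mq i j * (Z j : ℚ) = 0 := by
            calc ∑ j, Mq i j * (Z j : ℚ) = (∑ j, Mq i j * q j) * N := by
                  rw [Finset.sum_mul]
                  exact Finset.sum_congr rfl fun j _ => by rw [hZq j]; ring
              _ = 0 := by rw [hMq0 i]; ring
          have e3 : ∑ j, (A i j : ℚ) * ((u j : ℚ) - (v j : ℚ))
              = ∑ j, (A i j : ℚ) * (u j : ℚ) - ∑ j, (A i j : ℚ) * (v j : ℚ) := by
            rw [← Finset.sum_sub_distrib]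
            exact Finset.sum_congr rfl fun j _ => by ring
          have e4 := e1.trans e2
          rw [e3] at e4
          linarith
        have : ((A.mulVec u i : ℕ) : ℚ) = ((A.mulVec v i : ℕ) : ℚ) := by
          simp only [Matrix.mulVec, dotProduct]
          push_cast
          exact key
        exact_mod_cast this
      have hprod := H u v huv
      have hneu : ∀ j ∈ Finset.univ, x j ^ u j ≠ (0 : ℝ) := by
        intro j _
        by_cases hj : j ∈ S
        · exact pow_ne_zero _ (ne_of_gt (hpos j hj))
        · rw [hu]; simp [if_neg hj]
      have hnev : ∀ j ∈ Finset.univ, x j ^ v j ≠ (0 : ℝ) := by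
        intro j _
        by_cases hj : j ∈ S
        · exact pow_ne_zero _ (ne_of_gt (hpos j hj))
        · rw [hv]; simp [if_neg hj]
      have hlog : ∑ j, (u j : ℝ) * y j = ∑ j, (v j : ℝ) * y j := by
        calc ∑ j, (u j : ℝ) * y j = ∑ j, Real.log (x j ^ u j) :=
              Finset.sum_congr rfl fun j _ => (Real.log_pow _ _).symm
          _ = Real.log (∏ j, x j ^ u j) := (Real.log_prod hneu).symm
          _ = Real.log (∏ j, x j ^ v j) := by rw [hprod]
          _ = ∑ j, Real.log (x j ^ v j) := Real.log_prod hnev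
          _ = ∑ j, (v j : ℝ) * y j :=
              Finset.sum_congr rfl fun j _ => Real.log_pow _ _
      have hZsum : ∑ j, y j * (Z j : ℝ) = 0 := by
        have e5 : ∑ j, y j * (Z j : ℝ) = ∑ j, ((u j : ℝ) * y j - (v j : ℝ) * y j) := by
          refine Finset.sum_congr rfl fun j _ => ?_
          by_cases hj : j ∈ S
          · have : (u j : ℝ) - (v j : ℝ) = (Z j : ℝ) := by
              exact_mod_cast congrArg (fun t : ℤ => (t : ℝ)) (hZuv j hj)
            rw [← this]; ring
          · rw [hyS j hj]; ring
        rw [e5, Finset.sum_sub_distrib, hlog]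
        ring
      have hNR : (N : ℝ) ≠ 0 := Nat.cast_ne_zero.mpr hN0
      have e6 : (∑ j, y j * (q j : ℝ)) * N = 0 := by
        rw [Finset.sum_mul, ← hZsum]
        refine Finset.sum_congr rfl fun j _ => ?_
        have : (Z j : ℝ) = (q j : ℝ) * (N : ℝ) := by exact_mod_cast hZq j
        rw [this]; ring
      exact (mul_eq_zero.mp e6).resolve_right hNR
    -- Step 2: the functional vanishes on the whole real kernel.
    have key : ∀ z : Fin r → ℝ, (Mq.map ((↑) : ℚ → ℝ)) *ᵥ z = 0 → ∑ j, y j * z j = 0 := by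
      intro z hz
      have hz' := mem_span_ratKer Mq z hz
      set φ : (Fin r → ℝ) →ₗ[ℝ] ℝ := ∑ j, y j • LinearMap.proj j with hφ
      have hφ_apply : ∀ z : Fin r → ℝ, φ z = ∑ j, y j * z j := by
        intro z
        rw [hφ]
        simp [LinearMap.sum_apply]
      have hsub : Submodule.span ℝ ((fun q : Fin r → ℚ => fun j => ((q j : ℚ) : ℝ)) ''
          (LinearMap.ker Mq.mulVecLin : Set (Fin r → ℚ))) ≤ LinearMap.ker φ := by
        rw [Submodule.span_le]
        rintro _ ⟨q, hqmem, rfl⟩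
        rw [SetLike.mem_coe, LinearMap.mem_ker, hφ_apply]
        exact gen q (by simpa [Matrix.mulVecLin_apply] using hqmem)
      have hmem := hsub hz'
      rw [LinearMap.mem_ker, hφ_apply] at hmem
      exact hmem
    -- Step 3: `y` is in the row space.
    obtain ⟨lam, hlam⟩ := exists_vecMul_eq_of_forall_ker (Mq.map ((↑) : ℚ → ℝ)) y key
    refine ⟨fun i => Real.exp (lam i), fun i => Real.exp_pos _, ?_⟩
    intro j hj
    have h1 : ∑ i, lam i * ((Mq.map ((↑) : ℚ → ℝ)) i j) = y j := by
      have := congrFun hlam j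
      simpa [Matrix.vecMul, dotProduct] using this
    have h2 : ∑ i, (A i j : ℝ) * lam i = y j := by
      rw [← h1]
      refine Finset.sum_congr rfl fun i _ => ?_
      rw [hMq]
      simp [Matrix.map_apply, if_pos hj]
      ring
    calc x j = Real.exp (y j) := by rw [hy]; exact (Real.exp_log (hpos j hj)).symm
      _ = Real.exp (∑ i, (A i j : ℝ) * lam i) := by rw [h2]
      _ = ∏ i, Real.exp ((A i j : ℝ) * lam i) := Real.exp_sum _ _
      _ = ∏ i, Real.exp (lam i) ^ A i j :=
          Finset.prod_congr rfl fun i _ => Real.exp_nat_mul _ _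
  · -- backward direction
    rintro ⟨θ, hθ, hxθ⟩ u v huv
    set g : Fin r → ℝ := fun j => ∑ i, c i * (A i j : ℝ) with hg
    have hsum : ∑ j, (u j : ℝ) * g j = ∑ j, (v j : ℝ) * g j := by
      have lhs : ∀ w : Fin r → ℕ,
          ∑ j, (w j : ℝ) * g j = ∑ i, c i * ((A.mulVec w i : ℕ) : ℝ) := by
        intro w
        show ∑ j, (w j : ℝ) * (∑ i, c i * (A i j : ℝ)) = _
        simp only [Matrix.mulVec, dotProduct]
        push_cast
        simp only [Finset.mul_sum]
        rw [Finset.sum_comm]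
        refine Finset.sum_congr rfl fun i _ => ?_
        refine Finset.sum_congr rfl fun j _ => ?_
        ring
      rw [lhs u, lhs v, huv]
    by_cases hucase : ∀ j, j ∉ S → u j = 0
    · have hvsum0 : ∑ j, (v j : ℝ) * g j = 0 := by
        rw [← hsum]
        refine Finset.sum_eq_zero fun j _ => ?_
        by_cases hj : j ∈ S
        · have h0 : g j = 0 := (hgS j).mp hj
          rw [h0]; ring
        · rw [hucase j hj]; norm_num
      have hvcase : ∀ j, j ∉ S → v j = 0 := by
        intro j hj
        have hterm := (Finset.sum_eq_zero_iff_of_nonneg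
          (fun j _ => mul_nonneg (Nat.cast_nonneg _) (hcn j))).mp hvsum0 j (Finset.mem_univ j)
        have hgj : g j ≠ 0 := fun h => hj ((hgS j).mpr h)
        have : (v j : ℝ) = 0 := by
          rcases mul_eq_zero.mp hterm with h | h
          · exact h
          · exact absurd h hgj
        exact_mod_cast this
      have hfact : ∀ (w : Fin r → ℕ), (∀ j, j ∉ S → w j = 0) →
          ∏ j, x j ^ w j = ∏ i, θ i ^ (A.mulVec w i) := by
        intro w hw
        calc ∏ j, x j ^ w j = ∏ j, ∏ i, θ i ^ (A i j * w j) := by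
              refine Finset.prod_congr rfl fun j _ => ?_
              by_cases hj : j ∈ S
              · rw [hxθ j hj, ← Finset.prod_pow]
                exact Finset.prod_congr rfl fun i _ => (pow_mul _ _ _).symm
              · rw [hw j hj]; simp
          _ = ∏ i, ∏ j, θ i ^ (A i j * w j) := Finset.prod_comm
          _ = ∏ i, θ i ^ (∑ j, A i j * w j) :=
              Finset.prod_congr rfl fun i _ => Finset.prod_pow_eq_pow_sum _ _ _
          _ = ∏ i, θ i ^ (A.mulVec w i) := by
              refine Finset.prod_congr rfl fun i _ => ?_
              simp [Matrix.mulVec, dotProduct]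
      rw [hfact u hucase, hfact v hvcase, huv]
    · push_neg at hucase
      obtain ⟨j0, hj0S, hj0⟩ := hucase
      have hu0 : ∏ j, x j ^ u j = 0 :=
        Finset.prod_eq_zero (Finset.mem_univ j0)
          (by rw [hzero j0 hj0S]; exact zero_pow hj0)
      have hpos_sum : 0 < ∑ j, (u j : ℝ) * g j := by
        have hgj0 : 0 < g j0 :=
          lt_of_le_of_ne (hcn j0) (fun h => hj0S ((hgS j0).mpr h.symm))
        have hterm : 0 < (u j0 : ℝ) * g j0 := by
          have : (0 : ℝ) < (u j0 : ℝ) := by exact_mod_cast Nat.pos_of_ne_zero hj0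
          exact mul_pos this hgj0
        exact Finset.sum_pos' (fun j _ => mul_nonneg (Nat.cast_nonneg _) (hcn j))
          ⟨j0, Finset.mem_univ _, hterm⟩
      rw [hsum] at hpos_sum
      have hvex : ¬ (∀ j, j ∉ S → v j = 0) := by
        intro hvz
        have hzero' : ∑ j, (v j : ℝ) * g j = 0 := by
          refine Finset.sum_eq_zero fun j _ => ?_
          by_cases hj : j ∈ S
          · have h0 : g j = 0 := (hgS j).mp hj
            rw [h0]; ring
          · rw [hvz j hj]; norm_num
        rw [hzero'] at hpos_sum
        exact lt_irrefl _ hpos_sum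
      push_neg at hvex
      obtain ⟨j1, hj1S, hj1⟩ := hvex
      have hv0 : ∏ j, x j ^ v j = 0 :=
        Finset.prod_eq_zero (Finset.mem_univ j1)
          (by rw [hzero j1 hj1S]; exact zero_pow hj1)
      rw [hu0, hv0]

end
end

section
/- Let A ∈ ℕ^{d×r} be a matrix of nonnegative integers in which every column has a nonzero entry. Then every A-feasible subset F ⊆ [r] is facial for A; that is, there exists c ∈ ℝ^d with c^T a^j ≥ 0 for all j ∈ [r] and F = { j ∈ [r] : c^T a^j = 0 }. -/
/-!
Let `U` be the union of the supports of the columns indexed by `F`, and take `c` to be the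
indicator of the complement of `U`. Since `A` is nonnegative, `c` pairs nonnegatively with every
column, and the pairing vanishes exactly on the columns supported inside `U`. Every column of `F`
is, and feasibility says that no other column is.
-/

open scoped BigOperators

noncomputable section

section IndicatorPairing

variable {d r : ℕ} (A : Matrix (Fin d) (Fin r) ℕ) (U : Set (Fin d)) (j : Fin r)

open Classical in
theorem sum_indicator_compl_mul_eq :
    ∑ i, Uᶜ.indicator 1 i * (A i j : ℝ) = ((∑ i with i ∉ U, A i j : ℕ) : ℝ) := by
  rw [Nat.cast_sum, Finset.sum_filter]
  refine Finset.sum_congr rfl fun i _ => ?_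
  by_cases hi : i ∈ U <;> simp [hi]

theorem sum_indicator_compl_mul_nonneg : 0 ≤ ∑ i, Uᶜ.indicator 1 i * (A i j : ℝ) := by
  classical
  rw [sum_indicator_compl_mul_eq]
  exact Nat.cast_nonneg _

theorem sum_indicator_compl_mul_eq_zero_iff :
    ∑ i, Uᶜ.indicator 1 i * (A i j : ℝ) = 0 ↔ colSupp A j ⊆ U := by
  classical
  rw [sum_indicator_compl_mul_eq, Nat.cast_eq_zero, Finset.sum_eq_zero_iff]
  simp only [Finset.mem_filter, Finset.mem_univ, true_and]
  exact forall_congr' fun _ => not_imp_comm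

end IndicatorPairing

theorem aFeasible_isFacial_general
    (d r : ℕ) (A : Matrix (Fin d) (Fin r) ℕ)
    (F : Set (Fin r))
    (hF : AFeasible A F) :
    IsFacial A F := by
  set U := ⋃ k ∈ F, colSupp A k
  refine ⟨Uᶜ.indicator 1, sum_indicator_compl_mul_nonneg A U, ?_⟩
  ext j
  rw [Set.mem_ofPred_eq, sum_indicator_compl_mul_eq_zero_iff]
  exact ⟨fun hj => Set.subset_biUnion_of_mem (u := colSupp A) hj, not_imp_not.mp (hF j)⟩

/-- Every `A`-feasible subset is facial. -/
theorem aFeasible_isFacial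
    (d r : ℕ) (A : Matrix (Fin d) (Fin r) ℕ)
    (hcol : ∀ j, ∃ i, A i j ≠ 0) (F : Set (Fin r))
    (hF : AFeasible A F) :
    IsFacial A F :=
  aFeasible_isFacial_general d r A F hF

end
end

section
/- Let L = J(P) ⊆ 2^[m] be a natural distributive lattice, where P is a partial order on [m], and let G = ([m], E) be a graph containing the minimal graph of L. For every S ∈ L that is not the order-ideal closure of any clique of G, there exist distinct elements i, j ∈ S, both maximal elements of S with respect to P, such that {i,j} ∉ E and the sets S \ {i}, S \ {j}, and S \ {i,j} all belong to L. -/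
open scoped BigOperators
attribute [local instance] Classical.propDecidable

noncomputable section

/-- The order ideal of `P` generated by `S`: all elements lying below some element of `S`. -/
def orderIdealClosure {m : ℕ} (P : PartialOrder (Fin m)) (S : Finset (Fin m)) :
    Finset (Fin m) :=
  Finset.univ.filter (fun s => ∃ t ∈ S, P.le s t)

/-- The set of order-ideal closures of cliques of `G`. -/
def cliqueClosures {m : ℕ} (P : PartialOrder (Fin m)) (G : SimpleGraph (Fin m)) :
    Set (Finset (Fin m)) :=
  {S | ∃ C : Finset (Fin m), G.IsClique (C : Set (Fin m)) ∧ S = orderIdealClosure P C}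


/-- Every element of a finite set lies below a maximal element of it. -/
lemma exists_le_maximal_aux {m : ℕ} (P : PartialOrder (Fin m)) (S : Finset (Fin m)) :
    ∀ (n : ℕ) (s : Fin m), s ∈ S → (S.filter (fun x => P.lt s x)).card ≤ n →
      ∃ t ∈ S, P.le s t ∧ ∀ k ∈ S, ¬ P.lt t k := by
  intro n
  induction n with
  | zero =>
    intro s hs hcard
    refine ⟨s, hs, P.le_refl s, fun k hk hlt => ?_⟩
    have : k ∈ S.filter (fun x => P.lt s x) := Finset.mem_filter.mpr ⟨hk, hlt⟩
    have := Finset.card_pos.mpr ⟨k, this⟩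
    omega
  | succ n ih =>
    intro s hs hcard
    by_cases h : ∀ k ∈ S, ¬ P.lt s k
    · exact ⟨s, hs, P.le_refl s, h⟩
    · push_neg at h
      obtain ⟨k, hk, hlt⟩ := h
      have hsub : S.filter (fun x => P.lt k x) ⊂ S.filter (fun x => P.lt s x) := by
        constructor
        · intro x hx
          rw [Finset.mem_filter] at hx ⊢
          refine ⟨hx.1, ?_⟩
          have h1 := (P.lt_iff_le_not_ge s x)
          have h2 := (P.lt_iff_le_not_ge k x).mp hx.2
          have h3 := (P.lt_iff_le_not_ge s k).mp hlt
          refine h1.mpr ⟨P.le_trans _ _ _ h3.1 h2.1, fun hxs => h2.2 (P.le_trans _ _ _ hxs h3.1)⟩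
        · intro hsub'
          have : k ∈ S.filter (fun x => P.lt k x) := hsub' (Finset.mem_filter.mpr ⟨hk, hlt⟩)
          have h4 := (P.lt_iff_le_not_ge k k).mp (Finset.mem_filter.mp this).2
          exact h4.2 h4.1
      have hlt' : (S.filter (fun x => P.lt k x)).card < (S.filter (fun x => P.lt s x)).card :=
        Finset.card_lt_card hsub
      obtain ⟨t, ht, hle, hmax⟩ := ih k hk (by omega)
      exact ⟨t, ht, P.le_trans _ _ _ ((P.lt_iff_le_not_ge s k).mp hlt).1 hle, hmax⟩


/-- If `S ∈ L = J(P)` is not the order-ideal closure of any clique of `G` (where `G`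
contains the minimal graph of `L`), then `S` contains two distinct maximal elements
`i, j` that are not adjacent in `G`, and `S \ {i}`, `S \ {j}`, `S \ {i,j}` are in `L`. -/
theorem non_closure_has_nonedge_pair
    (m : ℕ) (P : PartialOrder (Fin m)) (G : SimpleGraph (Fin m))
    (hmin : minimalGraph P ≤ G)
    (S : Finset (Fin m)) (hS : S ∈ orderIdeals P)
    (hnot : S ∉ cliqueClosures P G) :
    ∃ i ∈ S, ∃ j ∈ S, i ≠ j ∧
      (∀ k ∈ S, ¬ P.lt i k) ∧ (∀ k ∈ S, ¬ P.lt j k) ∧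
      ¬ G.Adj i j ∧
      S \ {i} ∈ orderIdeals P ∧ S \ {j} ∈ orderIdeals P ∧
      S \ {i, j} ∈ orderIdeals P := by
  classical
  -- M : set of maximal elements of S
  set M := S.filter (fun t => ∀ k ∈ S, ¬ P.lt t k) with hM
  have hMsub : M ⊆ S := Finset.filter_subset _ _
  -- S equals the order-ideal closure of M
  have hSM : S = orderIdealClosure P M := by
    apply Finset.Subset.antisymm
    · intro s hs
      obtain ⟨t, ht, hle, hmax⟩ := exists_le_maximal_aux P S
        ((S.filter (fun x => P.lt s x)).card) s hs le_rfl
      exact Finset.mem_filter.mpr ⟨Finset.mem_univ s,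
        ⟨t, Finset.mem_filter.mpr ⟨ht, hmax⟩, hle⟩⟩
    · intro s hs
      obtain ⟨t, ht, hle⟩ := (Finset.mem_filter.mp hs).2
      exact hS t (hMsub ht) s hle
  -- M cannot be a clique
  have hMnc : ¬ G.IsClique (M : Set (Fin m)) := by
    intro hc
    exact hnot ⟨M, hc, hSM⟩
  -- extract nonadjacent pair
  rw [SimpleGraph.isClique_iff, Set.Pairwise] at hMnc
  push_neg at hMnc
  obtain ⟨i, hi, j, hj, hij, hadj⟩ := hMnc
  have hi' := Finset.mem_filter.mp hi
  have hj' := Finset.mem_filter.mp hj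
  refine ⟨i, hi'.1, j, hj'.1, hij, hi'.2, hj'.2, hadj, ?_, ?_, ?_⟩
  · intro t ht s hle
    rw [Finset.mem_sdiff] at ht ⊢
    refine ⟨hS t ht.1 s hle, fun hs => ?_⟩
    rw [Finset.mem_singleton] at hs
    subst hs
    rcases eq_or_ne s t with rfl | hne
    · exact ht.2 (Finset.mem_singleton_self s)
    · exact hi'.2 t ht.1 ((P.lt_iff_le_not_ge s t).mpr ⟨hle, fun h => hne (P.le_antisymm _ _ hle h)⟩)
  · intro t ht s hle
    rw [Finset.mem_sdiff] at ht ⊢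
    refine ⟨hS t ht.1 s hle, fun hs => ?_⟩
    rw [Finset.mem_singleton] at hs
    subst hs
    rcases eq_or_ne s t with rfl | hne
    · exact ht.2 (Finset.mem_singleton_self s)
    · exact hj'.2 t ht.1 ((P.lt_iff_le_not_ge s t).mpr ⟨hle, fun h => hne (P.le_antisymm _ _ hle h)⟩)
  · intro t ht s hle
    rw [Finset.mem_sdiff] at ht ⊢
    refine ⟨hS t ht.1 s hle, fun hs => ?_⟩
    rcases eq_or_ne s t with rfl | hne
    · exact ht.2 hs
    · have hlt : P.lt s t := (P.lt_iff_le_not_ge s t).mpr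
        ⟨hle, fun h => hne (P.le_antisymm _ _ hle h)⟩
      rw [Finset.mem_insert, Finset.mem_singleton] at hs
      rcases hs with rfl | rfl
      · exact hi'.2 t ht.1 hlt
      · exact hj'.2 t ht.1 hlt

end
end

section
/- Let G be a graph on [m] and K a field. Consider the two K-algebra homomorphisms from the polynomial ring K[p_R : R ⊆ [m]]: the standard parametrization φ_G into K[a^S_T : S a maximal clique of G, T ⊆ S] defined by p_R ↦ ∏_{S maximal clique of G} a^S_{S∩R}, and the alternative parametrization ψ_G into K[c_C : C ∈ C(G)] defined by p_R ↦ ∏_{C ∈ C(G), C ⊆ R} c_C, where C(G) is the set of all cliques of G including the empty clique. Then ker φ_G = ker ψ_G. -/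
open scoped BigOperators
attribute [local instance] Classical.propDecidable

noncomputable section

open MvPolynomial

/-- Index type for the variables `a^S_T` of the standard parametrization:
pairs `(S, T)` with `S` a maximal clique of `G` and `T ⊆ S`. -/
abbrev MaxCliquePairs {m : ℕ} (G : SimpleGraph (Fin m)) : Type :=
  {ST : Finset (Fin m) × Finset (Fin m) // IsMaxClique G ST.1 ∧ ST.2 ⊆ ST.1}

/-- Index type for the variables `c_C` of the alternative parametrization:
the cliques of `G` (including the empty clique). -/
abbrev Cliques {m : ℕ} (G : SimpleGraph (Fin m)) : Type :=
  {C : Finset (Fin m) // G.IsClique (C : Set (Fin m))}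

/-- The standard parametrization `φ_G`: `p_R ↦ ∏_{S maximal clique} a^S_{S ∩ R}`. -/
def stdParam {m : ℕ} (G : SimpleGraph (Fin m)) (K : Type*) [CommRing K] :
    MvPolynomial (Finset (Fin m)) K →ₐ[K] MvPolynomial (MaxCliquePairs G) K :=
  aeval (fun R : Finset (Fin m) =>
    ∏ S : {S : Finset (Fin m) // IsMaxClique G S},
      (X (⟨(S.1, S.1 ∩ R), ⟨S.2, Finset.inter_subset_left⟩⟩ : MaxCliquePairs G) :
        MvPolynomial (MaxCliquePairs G) K))

/-- The alternative parametrization `ψ_G`: `p_R ↦ ∏_{C clique of G, C ⊆ R} c_C`. -/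
def altParam {m : ℕ} (G : SimpleGraph (Fin m)) (K : Type*) [CommRing K] :
    MvPolynomial (Finset (Fin m)) K →ₐ[K] MvPolynomial (Cliques G) K :=
  aeval (fun R : Finset (Fin m) =>
    ∏ C ∈ Finset.univ.filter (fun C : Cliques G => (C.1 : Finset (Fin m)) ⊆ R),
      (X C : MvPolynomial (Cliques G) K))

/-!
Both parametrizations are monomial maps, so their kernels agree as soon as they identify the same
monomials `p^u`. The exponent of `a^S_T` in `φ_G(p^u)` counts the `R` in `u` with `S ∩ R = T`, that
of `c_C` in `ψ_G(p^u)` counts the `R ⊇ C`. For `C ⊆ S` the second count is the sum of the first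
over `T ⊇ C`, a triangular relation that can be inverted, and every clique lies in a maximal
clique; so the two families of counts determine each other.
-/

open Finsupp (linearCombination)

section MonomialMap

variable {σ τ τ' R : Type*} [CommSemiring R]

lemma aeval_monomial_one_monomial (g : σ → τ →₀ ℕ) (u : σ →₀ ℕ) (r : R) :
    aeval (fun i => monomial (g i) (1 : R)) (monomial u r)
      = monomial (linearCombination ℕ g u) r := by
  simp only [aeval_monomial, algebraMap_eq, monomial_pow, one_pow,
    Finsupp.linearCombination_apply, monomial_finsupp_sum_index]

lemma coeff_aeval_monomial_one (g : σ → τ →₀ ℕ) (p : MvPolynomial σ R) (d : τ →₀ ℕ) :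
    coeff d (aeval (fun i => monomial (g i) (1 : R)) p)
      = ∑ u ∈ p.support with linearCombination ℕ g u = d, coeff u p := by
  conv_lhs => rw [p.as_sum]
  simp only [map_sum, coeff_sum, aeval_monomial_one_monomial, coeff_monomial, Finset.sum_filter]

lemma aeval_monomial_one_eq_zero_iff (g : σ → τ →₀ ℕ) (p : MvPolynomial σ R) :
    aeval (fun i => monomial (g i) (1 : R)) p = 0 ↔
      ∀ u ∈ p.support,
        ∑ w ∈ p.support with linearCombination ℕ g w = linearCombination ℕ g u, coeff w p = 0 := by
  refine ⟨fun h u _ => by rw [← coeff_aeval_monomial_one, h, coeff_zero], fun h => ?_⟩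
  ext d
  rw [coeff_aeval_monomial_one, coeff_zero]
  by_cases hd : ∃ u ∈ p.support, linearCombination ℕ g u = d
  · obtain ⟨u, hu, rfl⟩ := hd
    exact h u hu
  · exact Finset.sum_eq_zero fun w hw => (hd ⟨w, Finset.mem_filter.1 hw⟩).elim

lemma ker_aeval_monomial_one_eq (g : σ → τ →₀ ℕ) (g' : σ → τ' →₀ ℕ)
    (h : ∀ u v, linearCombination ℕ g u = linearCombination ℕ g v ↔
      linearCombination ℕ g' u = linearCombination ℕ g' v) :
    RingHom.ker (aeval (R := R) (σ := σ) fun i => monomial (g i) (1 : R))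
      = RingHom.ker (aeval (R := R) (σ := σ) fun i => monomial (g' i) (1 : R)) := by
  ext p
  simp only [RingHom.mem_ker, aeval_monomial_one_eq_zero_iff, h]

end MonomialMap

lemma eq_of_forall_sum_filter_le_eq {α M : Type*} [Fintype α] [PartialOrder α] [DecidableLE α]
    [AddCancelCommMonoid M] {f g : α → M}
    (h : ∀ a, ∑ b with a ≤ b, f b = ∑ b with a ≤ b, g b) : f = g := by
  funext a
  induction a using WellFoundedGT.induction with
  | _ a ih =>
    have sum_split (φ : α → M) : ∑ b with a ≤ b, φ b = φ a + ∑ b with a < b, φ b := by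
      rw [← Finset.add_sum_erase _ _ (Finset.mem_filter.2 ⟨Finset.mem_univ a, le_rfl⟩)]
      congr 2
      ext b
      simp [lt_iff_le_and_ne, and_comm, eq_comm]
    have hgt : ∑ b with a < b, f b = ∑ b with a < b, g b :=
      Finset.sum_congr rfl fun b hb => ih b (Finset.mem_filter.1 hb).2
    have ha := h a
    rw [sum_split, sum_split, hgt] at ha
    exact add_right_cancel ha

section SubsetCounts

variable {α : Type*} [Fintype α] [DecidableEq α]

/-- `traceCount u S T` and `upperCount u C` are the exponents of `a^S_T` in `φ_G(p^u)` and of `c_C`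
in `ψ_G(p^u)`. -/
def traceCount (u : Finset α →₀ ℕ) (S T : Finset α) : ℕ :=
  ∑ R with S ∩ R = T, u R

def upperCount (u : Finset α →₀ ℕ) (C : Finset α) : ℕ :=
  ∑ R with C ⊆ R, u R

lemma traceCount_eq_zero_of_not_subset (u : Finset α →₀ ℕ) {S T : Finset α} (hTS : ¬T ⊆ S) :
    traceCount u S T = 0 :=
  Finset.sum_eq_zero fun _ hR => (hTS ((Finset.mem_filter.1 hR).2 ▸ Finset.inter_subset_left)).elim

lemma sum_traceCount_filter_le (u : Finset α →₀ ℕ) (S C : Finset α) :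
    ∑ T with C ≤ T, traceCount u S T = if C ⊆ S then upperCount u C else 0 := by
  have inner (R : Finset α) :
      (∑ T with C ≤ T, if S ∩ R = T then u R else 0) = if C ⊆ S ∩ R then u R else 0 := by
    rw [Finset.sum_ite_eq]
    simp
  simp only [traceCount, upperCount, Finset.sum_filter (p := fun R => S ∩ R = _)]
  rw [Finset.sum_comm]
  simp only [inner]
  split_ifs with hCS <;> simp [Finset.subset_inter_iff, hCS, Finset.sum_filter]

lemma traceCount_eq_iff (u v : Finset α →₀ ℕ) (S : Finset α) :
    traceCount u S = traceCount v S ↔ ∀ C ⊆ S, upperCount u C = upperCount v C := by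
  constructor
  · intro h C hCS
    simpa [sum_traceCount_filter_le, hCS] using congrArg (fun f => ∑ T with C ≤ T, f T) h
  · intro h
    refine eq_of_forall_sum_filter_le_eq fun C => ?_
    rw [sum_traceCount_filter_le, sum_traceCount_filter_le]
    split_ifs with hCS
    exacts [h C hCS, rfl]

end SubsetCounts

section Cliques

variable {m : ℕ} (G : SimpleGraph (Fin m))

lemma exists_isMaxClique_superset {C : Finset (Fin m)} (hC : G.IsClique (C : Set (Fin m))) :
    ∃ S, IsMaxClique G S ∧ C ⊆ S := by
  obtain ⟨S, hCS, hS⟩ :=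
    Finite.exists_le_maximal (p := fun T : Finset (Fin m) => G.IsClique (T : Set (Fin m))) hC
  exact ⟨S, ⟨hS.prop, fun T hT hST => le_antisymm (hS.2 hT hST) hST⟩, hCS⟩

def stdExponent (R : Finset (Fin m)) : MaxCliquePairs G →₀ ℕ :=
  ∑ S : {S : Finset (Fin m) // IsMaxClique G S},
    Finsupp.single ⟨(S.1, S.1 ∩ R), S.2, Finset.inter_subset_left⟩ 1

def altExponent (R : Finset (Fin m)) : Cliques G →₀ ℕ :=
  ∑ C : Cliques G with C.1 ⊆ R, Finsupp.single C 1

lemma stdParam_eq_aeval_monomial (K : Type*) [CommRing K] :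
    stdParam G K = aeval fun R => monomial (stdExponent G R) (1 : K) := by
  simp only [stdParam, stdExponent, monomial_sum_one]
  rfl

lemma altParam_eq_aeval_monomial (K : Type*) [CommRing K] :
    altParam G K = aeval fun R => monomial (altExponent G R) (1 : K) := by
  simp only [altParam, altExponent, monomial_sum_one]
  rfl

lemma stdExponent_apply (R : Finset (Fin m)) (ST : MaxCliquePairs G) :
    stdExponent G R ST = if ST.1.1 ∩ R = ST.1.2 then 1 else 0 := by
  obtain ⟨⟨S, T⟩, hS, hTS⟩ := ST
  rw [stdExponent, Finsupp.finsetSum_apply, Finset.sum_eq_single ⟨S, hS⟩]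
  · simp [Finsupp.single_apply]
  · intro S' _ hS'
    exact Finsupp.single_eq_of_ne fun h => hS' (Subtype.ext (congrArg (·.1.1) h).symm)
  · simp

lemma altExponent_apply (R : Finset (Fin m)) (C : Cliques G) :
    altExponent G R C = if C.1 ⊆ R then 1 else 0 := by
  simp [altExponent, Finsupp.finsetSum_apply, Finsupp.single_apply]

lemma linearCombination_stdExponent_apply (u : Finset (Fin m) →₀ ℕ) (ST : MaxCliquePairs G) :
    linearCombination ℕ (stdExponent G) u ST = traceCount u ST.1.1 ST.1.2 := by
  simp [Finsupp.linearCombination_apply, Finsupp.sum_fintype, stdExponent_apply,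
    traceCount, Finset.sum_filter]

lemma linearCombination_altExponent_apply (u : Finset (Fin m) →₀ ℕ) (C : Cliques G) :
    linearCombination ℕ (altExponent G) u C = upperCount u C.1 := by
  simp [Finsupp.linearCombination_apply, Finsupp.sum_fintype, altExponent_apply,
    upperCount, Finset.sum_filter]

lemma linearCombination_stdExponent_eq_iff (u v : Finset (Fin m) →₀ ℕ) :
    linearCombination ℕ (stdExponent G) u = linearCombination ℕ (stdExponent G) v ↔
      ∀ S, IsMaxClique G S → traceCount u S = traceCount v S := by
  simp only [Finsupp.ext_iff, Subtype.forall, Prod.forall, linearCombination_stdExponent_apply]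
  refine ⟨fun h S hS => funext fun T => ?_, fun h S T hST => by rw [h S hST.1]⟩
  by_cases hTS : T ⊆ S
  · exact h S T ⟨hS, hTS⟩
  · rw [traceCount_eq_zero_of_not_subset u hTS, traceCount_eq_zero_of_not_subset v hTS]

lemma linearCombination_altExponent_eq_iff (u v : Finset (Fin m) →₀ ℕ) :
    linearCombination ℕ (altExponent G) u = linearCombination ℕ (altExponent G) v ↔
      ∀ C : Finset (Fin m), G.IsClique (C : Set (Fin m)) → upperCount u C = upperCount v C := by
  simp only [Finsupp.ext_iff, Subtype.forall, linearCombination_altExponent_apply]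

lemma linearCombination_stdExponent_eq_iff_altExponent (u v : Finset (Fin m) →₀ ℕ) :
    linearCombination ℕ (stdExponent G) u = linearCombination ℕ (stdExponent G) v ↔
      linearCombination ℕ (altExponent G) u = linearCombination ℕ (altExponent G) v := by
  simp only [linearCombination_stdExponent_eq_iff, linearCombination_altExponent_eq_iff,
    traceCount_eq_iff]
  constructor
  · intro h C hC
    obtain ⟨S, hS, hCS⟩ := exists_isMaxClique_superset G hC
    exact h S hS C hCS
  · exact fun h S hS C hCS => h C (hS.1.subset (Finset.coe_subset.2 hCS))

end Cliques

/-- The standard and alternative parametrizations of the binary graphical model of `G`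
have the same kernel. -/
theorem ker_stdParam_eq_ker_altParam
    (m : ℕ) (G : SimpleGraph (Fin m)) (K : Type*) [Field K] :
    RingHom.ker (stdParam G K).toRingHom = RingHom.ker (altParam G K).toRingHom := by
  rw [stdParam_eq_aeval_monomial, altParam_eq_aeval_monomial]
  exact ker_aeval_monomial_one_eq _ _ (linearCombination_stdExponent_eq_iff_altExponent G)

end
end

section
/- Let L = J(P) ⊆ 2^[m] be a natural distributive lattice, G the minimal graph of L, and K a field. Then the kernel of the alternative parametrization ψ_G : K[p_S : S ∈ L] → K[c_C : C ∈ C(G)], p_T ↦ ∏_{C ∈ C(G), C ⊆ T} c_C, equals the kernel of the Hibi parametrization φ_L : K[p_S : S ∈ L] → K[t, b_1, …, b_m], p_S ↦ t · ∏_{i∈S} b_i; that is, the lattice graphical model ideal I_{L,G} equals the Hibi ideal I_L. -/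
open scoped BigOperators
attribute [local instance] Classical.propDecidable

noncomputable section

open MvPolynomial

/-- The comparability graph of `P`: distinct comparable elements are adjacent. -/
def compGraph {m : ℕ} (P : PartialOrder (Fin m)) : SimpleGraph (Fin m) where
  Adj i j := P.lt i j ∨ P.lt j i
  symm := ⟨by intro i j h; tauto⟩
  loopless := ⟨by
    intro i h
    rcases h with h | h <;>
      exact ((P.lt_iff_le_not_ge i i).mp h).2 ((P.lt_iff_le_not_ge i i).mp h).1⟩

/-- The alternative parametrization `ψ_G` restricted to the lattice `L = J(P)`:
`p_T ↦ ∏_{C clique of G, C ⊆ T} c_C`. -/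
def altParamL {m : ℕ} (P : PartialOrder (Fin m)) (G : SimpleGraph (Fin m))
    (K : Type*) [CommRing K] :
    MvPolynomial (↥(orderIdeals P)) K →ₐ[K] MvPolynomial (Cliques G) K :=
  aeval (fun S : ↥(orderIdeals P) =>
    ∏ C ∈ Finset.univ.filter
        (fun C : Cliques G => (C.1 : Finset (Fin m)) ⊆ (S : Finset (Fin m))),
      (X C : MvPolynomial (Cliques G) K))

/-- The Hibi parametrization `φ_L`: `p_S ↦ t · ∏_{i ∈ S} b_i`, where `t` is the variable
`X none` and `b_i` is the variable `X (some i)`. -/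
def hibiParam {m : ℕ} (P : PartialOrder (Fin m)) (K : Type*) [CommRing K] :
    MvPolynomial (↥(orderIdeals P)) K →ₐ[K] MvPolynomial (Option (Fin m)) K :=
  aeval (fun S : ↥(orderIdeals P) =>
    (X none : MvPolynomial (Option (Fin m)) K) *
      ∏ i ∈ (S : Finset (Fin m)), X (some i))

variable {m : ℕ} (P : PartialOrder (Fin m))

lemma covers_ne {i j : Fin m} (h : Covers P i j) : i ≠ j := by
  intro e; subst e; exact ((P.lt_iff_le_not_ge i i).mp h.1).2 ((P.lt_iff_le_not_ge i i).mp h.1).1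

lemma covers_le {i j : Fin m} (h : Covers P i j) : P.le j i :=
  ((P.lt_iff_le_not_ge j i).mp h.1).1

lemma mid_not_adj {x y z : Fin m} (h1 : P.lt x y) (h2 : P.lt y z) :
    ¬ (minimalGraph P).Adj x z := by
  rintro (⟨h, _⟩ | ⟨_, h'⟩)
  · exact ((P.lt_iff_le_not_ge x z).mp (@lt_trans _ P.toPreorder _ _ _ h1 h2)).2
      ((P.lt_iff_le_not_ge z x).mp h).1
  · exact h' y ⟨h1, h2⟩

lemma adj_lt {i j : Fin m} (h : (minimalGraph P).Adj i j) : P.lt i j ∨ P.lt j i := by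
  rcases h with h | h
  · exact Or.inr h.1
  · exact Or.inl h.1

lemma clique_card_le_two (C : Cliques (minimalGraph P)) : C.1.card ≤ 2 := by
  by_contra h
  push_neg at h
  obtain ⟨a, b, c, ha, hb, hc, hab, hac, hbc⟩ := Finset.two_lt_card_iff.mp h
  have Hab := C.2 (Finset.mem_coe.mpr ha) (Finset.mem_coe.mpr hb) hab
  have Hac := C.2 (Finset.mem_coe.mpr ha) (Finset.mem_coe.mpr hc) hac
  have Hbc := C.2 (Finset.mem_coe.mpr hb) (Finset.mem_coe.mpr hc) hbc
  rcases adj_lt P Hab with h1 | h1 <;> rcases adj_lt P Hbc with h2 | h2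
  · exact mid_not_adj P h1 h2 Hac
  · rcases adj_lt P Hac with h3 | h3
    · exact mid_not_adj P h3 h2 Hab
    · exact mid_not_adj P h3 h1 Hbc.symm
  · rcases adj_lt P Hac with h3 | h3
    · exact mid_not_adj P h1 h3 Hbc
    · exact mid_not_adj P h2 h3 Hab.symm
  · exact mid_not_adj P h2 h1 Hac.symm

def emptyClique : Cliques (minimalGraph P) := ⟨∅, by simp⟩

def singClique (i : Fin m) : Cliques (minimalGraph P) := ⟨{i}, by simp⟩

def pairClique (i j : Fin m) : Cliques (minimalGraph P) :=
  if h : Covers P i j then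
    ⟨{i, j}, by
      rw [Finset.coe_insert, Finset.coe_singleton]
      exact SimpleGraph.isClique_pair.mpr fun _ => Or.inl h⟩
  else emptyClique P

def covSet (i : Fin m) : Finset (Fin m) := Finset.univ.filter (fun j => Covers P i j)

lemma prod_cliques {M : Type*} [CommMonoid M]
    (f : Cliques (minimalGraph P) → M) (T : Finset (Fin m)) (hT : T ∈ orderIdeals P) :
    ∏ C ∈ Finset.univ.filter
        (fun C : Cliques (minimalGraph P) => C.1 ⊆ T), f C
      = f (emptyClique P) *
          ∏ i ∈ T, (f (singClique P i) * ∏ j ∈ covSet P i, f (pairClique P i j)) := by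
  classical
  set A := Finset.univ.filter (fun C : Cliques (minimalGraph P) => C.1 ⊆ T) with hA
  have hsplit : A = (A.filter (fun C => C.1.card = 0)) ∪
      ((A.filter (fun C => C.1.card = 1)) ∪ (A.filter (fun C => C.1.card = 2))) := by
    ext C
    simp only [Finset.mem_union, Finset.mem_filter]
    constructor
    · intro hC
      have := clique_card_le_two P C
      interval_cases h : C.1.card <;> tauto
    · tauto
  have hd1 : Disjoint (A.filter (fun C => C.1.card = 0))
      ((A.filter (fun C => C.1.card = 1)) ∪ (A.filter (fun C => C.1.card = 2))) := by
    rw [Finset.disjoint_union_right]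
    constructor <;>
      (rw [Finset.disjoint_left]; intro C hC hC';
        simp only [Finset.mem_filter] at hC hC'; omega)
  have hd2 : Disjoint (A.filter (fun C => C.1.card = 1)) (A.filter (fun C => C.1.card = 2)) := by
    rw [Finset.disjoint_left]; intro C hC hC'
    simp only [Finset.mem_filter] at hC hC'; omega
  rw [hsplit, Finset.prod_union hd1, Finset.prod_union hd2]
  have h0 : A.filter (fun C => C.1.card = 0) = {emptyClique P} := by
    ext C
    simp only [Finset.mem_filter, Finset.mem_singleton, Finset.card_eq_zero, hA,
      Finset.mem_univ, true_and]
    constructor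
    · rintro ⟨-, h⟩; exact Subtype.ext h
    · rintro rfl; exact ⟨Finset.empty_subset T, rfl⟩
  have h1 : ∏ C ∈ A.filter (fun C => C.1.card = 1), f C = ∏ i ∈ T, f (singClique P i) := by
    refine (Finset.prod_bij (fun i _ => singClique P i) ?_ ?_ ?_ ?_).symm
    · intro i hi
      simp only [hA, Finset.mem_filter, Finset.mem_univ, true_and, singClique]
      exact ⟨Finset.singleton_subset_iff.mpr hi, Finset.card_singleton i⟩
    · intro i _ j _ h
      have : ({i} : Finset (Fin m)) = {j} := congrArg Subtype.val h
      exact Finset.singleton_injective this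
    · intro C hC
      simp only [hA, Finset.mem_filter, Finset.mem_univ, true_and] at hC
      obtain ⟨i, hi⟩ := Finset.card_eq_one.mp hC.2
      refine ⟨i, ?_, ?_⟩
      · have := hC.1; rw [hi] at this; exact Finset.singleton_subset_iff.mp this
      · exact (Subtype.ext hi).symm
    · intros; rfl
  have h2 : ∏ C ∈ A.filter (fun C => C.1.card = 2), f C
      = ∏ i ∈ T, ∏ j ∈ covSet P i, f (pairClique P i j) := by
    rw [← Finset.prod_sigma T (fun i => covSet P i) (fun x => f (pairClique P x.1 x.2))]
    refine (Finset.prod_bij (fun x _ => pairClique P x.1 x.2) ?_ ?_ ?_ ?_).symm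
    · rintro ⟨i, j⟩ hx
      simp only [Finset.mem_sigma, covSet, Finset.mem_filter, Finset.mem_univ, true_and] at hx
      obtain ⟨hiT, hcov⟩ := hx
      simp only [hA, Finset.mem_filter, Finset.mem_univ, true_and, pairClique, dif_pos hcov]
      constructor
      · intro a ha
        simp only [Finset.mem_insert, Finset.mem_singleton] at ha
        rcases ha with rfl | rfl
        · exact hiT
        · exact hT i hiT a (covers_le P hcov)
      · rw [Finset.card_insert_of_notMem (by simpa using covers_ne P hcov),
          Finset.card_singleton]
    · rintro ⟨i, j⟩ hx ⟨i', j'⟩ hx' h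
      simp only [Finset.mem_sigma, covSet, Finset.mem_filter, Finset.mem_univ, true_and] at hx hx'
      have heq : ({i, j} : Finset (Fin m)) = {i', j'} := by
        have := congrArg Subtype.val h
        simpa only [pairClique, dif_pos hx.2, dif_pos hx'.2] using this
      have hi : i = i' ∧ j = j' := by
        have hmi : i ∈ ({i', j'} : Finset (Fin m)) := heq ▸ Finset.mem_insert_self i {j}
        simp only [Finset.mem_insert, Finset.mem_singleton] at hmi
        rcases hmi with rfl | rfl
        · constructor
          · rfl
          · have hmj : j ∈ ({i, j'} : Finset (Fin m)) := heq ▸ (by simp)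
            simp only [Finset.mem_insert, Finset.mem_singleton] at hmj
            rcases hmj with rfl | rfl
            · exact absurd rfl (covers_ne P hx.2).symm
            · rfl
        · -- i = j', so Covers P i' i and Covers P i j
          exfalso
          have hmj : j ∈ ({i', i} : Finset (Fin m)) := heq ▸ (by simp)
          simp only [Finset.mem_insert, Finset.mem_singleton] at hmj
          rcases hmj with rfl | rfl
          · -- j = i', Covers P i j and Covers P j i
            exact ((P.lt_iff_le_not_ge j i).mp hx.2.1).2 (covers_le P hx'.2)
          · exact covers_ne P hx.2 rfl
      obtain ⟨rfl, rfl⟩ := hi; rfl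
    · intro C hC
      simp only [hA, Finset.mem_filter, Finset.mem_univ, true_and] at hC
      obtain ⟨a, b, hab, hC2⟩ := Finset.card_eq_two.mp hC.2
      have hadj : (minimalGraph P).Adj a b := by
        refine C.2 ?_ ?_ hab <;> rw [hC2] <;> simp
      have hsub := hC.1; rw [hC2] at hsub
      have haT : a ∈ T := hsub (Finset.mem_insert_self a {b})
      have hbT : b ∈ T := hsub (by simp)
      rcases hadj with hcov | hcov
      · -- Covers P a b
        refine ⟨⟨a, b⟩, ?_, ?_⟩
        · simp [Finset.mem_sigma, covSet, haT, hcov]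
        · simp only [pairClique, dif_pos hcov]
          exact (Subtype.ext hC2).symm
      · refine ⟨⟨b, a⟩, ?_, ?_⟩
        · simp [Finset.mem_sigma, covSet, hbT, hcov]
        · simp only [pairClique, dif_pos hcov]
          exact (Subtype.ext (by rw [hC2, Finset.pair_comm])).symm
    · intros; rfl
  rw [h0, h1, h2, Finset.prod_singleton, Finset.prod_mul_distrib]

/-- Substitution sending `c_∅ ↦ t`, `c_{i} ↦ b_i`, `c_C ↦ 1` for `|C| = 2`. -/
def hvar {m : ℕ} (P : PartialOrder (Fin m)) (K : Type*) [CommRing K] :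
    Cliques (minimalGraph P) → MvPolynomial (Option (Fin m)) K :=
  fun C => if C.1.card = 0 then X none
    else if C.1.card = 1 then ∏ i ∈ C.1, X (some i) else 1

/-- Substitution sending `t ↦ c_∅` and `b_i ↦ c_{i} · ∏_{j ⋖ i} c_{i,j}`. -/
def gvar {m : ℕ} (P : PartialOrder (Fin m)) (K : Type*) [CommRing K] :
    Option (Fin m) → MvPolynomial (Cliques (minimalGraph P)) K
  | none => X (emptyClique P)
  | some i => X (singClique P i) * ∏ j ∈ covSet P i, X (pairClique P i j)

lemma comp_alt {m : ℕ} (P : PartialOrder (Fin m)) (K : Type*) [CommRing K] :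
    (aeval (hvar P K)).comp (altParamL P (minimalGraph P) K) = hibiParam P K := by
  apply MvPolynomial.algHom_ext
  intro S
  simp only [AlgHom.comp_apply, altParamL, hibiParam, aeval_X, map_prod]
  rw [prod_cliques P (hvar P K) S.1 S.2]
  have e0 : hvar P K (emptyClique P) = (X none : MvPolynomial (Option (Fin m)) K) := by
    simp [hvar, emptyClique]
  have e1 : ∀ i : Fin m, hvar P K (singClique P i)
      = (X (some i) : MvPolynomial (Option (Fin m)) K) := by
    intro i; simp [hvar, singClique]
  have e2 : ∀ i : Fin m, ∀ j ∈ covSet P i, hvar P K (pairClique P i j)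
      = (1 : MvPolynomial (Option (Fin m)) K) := by
    intro i j hj
    simp only [covSet, Finset.mem_filter] at hj
    have hc : (pairClique P i j).1.card = 2 := by
      simp only [pairClique, dif_pos hj.2]
      rw [Finset.card_insert_of_notMem (by simpa using covers_ne P hj.2),
        Finset.card_singleton]
    simp [hvar, hc]
  rw [e0]
  congr 1
  refine Finset.prod_congr rfl fun i _ => ?_
  rw [e1, Finset.prod_congr rfl (fun j hj => e2 i j hj), Finset.prod_const_one, mul_one]

lemma comp_hibi {m : ℕ} (P : PartialOrder (Fin m)) (K : Type*) [CommRing K] :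
    (aeval (gvar P K)).comp (hibiParam P K) = altParamL P (minimalGraph P) K := by
  apply MvPolynomial.algHom_ext
  intro S
  simp only [AlgHom.comp_apply, altParamL, hibiParam, aeval_X, map_mul, map_prod]
  rw [prod_cliques P (fun C => (X C : MvPolynomial (Cliques (minimalGraph P)) K)) S.1 S.2]
  rfl


/-- For the minimal graph `G` of a natural distributive lattice `L = J(P)`, the lattice
graphical model ideal equals the Hibi ideal: `ker ψ_G = ker φ_L`. -/
theorem ker_altParam_minimalGraph_eq_ker_hibiParam
    (m : ℕ) (P : PartialOrder (Fin m)) (K : Type*) [Field K] :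
    RingHom.ker (altParamL P (minimalGraph P) K).toRingHom =
      RingHom.ker (hibiParam P K).toRingHom := by
  ext f
  simp only [RingHom.mem_ker, AlgHom.toRingHom_eq_coe, RingHom.coe_coe]
  constructor
  · intro h
    have := congrArg (fun F : MvPolynomial (↥(orderIdeals P)) K →ₐ[K] _ => F f) (comp_alt P K)
    simp only [AlgHom.comp_apply, h, map_zero] at this
    exact this.symm
  · intro h
    have := congrArg (fun F : MvPolynomial (↥(orderIdeals P)) K →ₐ[K] _ => F f) (comp_hibi P K)
    simp only [AlgHom.comp_apply, h, map_zero] at this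
    exact this.symm

end
end

section
/- Let L = J(P) ⊆ 2^[m] be a natural distributive lattice and let G be any graph on [m] whose edge set contains all cover relations of P and is contained in the edge set of the comparability graph of P. Then over any field K, the kernel of the alternative parametrization ψ_G : K[p_S : S ∈ L] → K[c_C : C ∈ C(G)], p_T ↦ ∏_{C ∈ C(G), C ⊆ T} c_C, equals the kernel of the Hibi parametrization φ_L : K[p_S : S ∈ L] → K[t, b_1, …, b_m], p_S ↦ t · ∏_{i∈S} b_i; that is, I_{L,G} = I_L. -/
open scoped BigOperators
attribute [local instance] Classical.propDecidable

noncomputable section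

open MvPolynomial

section Aux

variable {m : ℕ}

/-- Every nonempty finite chain has a top element. -/
lemma exists_top_of_chain (P : PartialOrder (Fin m)) (C : Finset (Fin m)) :
    (∀ a ∈ C, ∀ b ∈ C, P.le a b ∨ P.le b a) → C.Nonempty →
      ∃ i ∈ C, ∀ j ∈ C, P.le j i := by
  classical
  induction C using Finset.induction_on with
  | empty => intro _ h; simp at h
  | @insert a s ha ih =>
    intro hc _
    rcases s.eq_empty_or_nonempty with rfl | hs
    · refine ⟨a, by simp, ?_⟩
      intro j hj
      simp only [Finset.mem_insert, Finset.notMem_empty, or_false] at hj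
      rw [hj]
    · obtain ⟨i, hi, htop⟩ := ih
        (fun x hx y hy => hc x (Finset.mem_insert_of_mem hx) y (Finset.mem_insert_of_mem hy)) hs
      rcases hc a (Finset.mem_insert_self a s) i (Finset.mem_insert_of_mem hi) with h | h
      · refine ⟨i, Finset.mem_insert_of_mem hi, ?_⟩
        intro j hj
        rcases Finset.mem_insert.mp hj with rfl | hj
        · exact h
        · exact htop j hj
      · refine ⟨a, Finset.mem_insert_self a s, ?_⟩
        intro j hj
        rcases Finset.mem_insert.mp hj with rfl | hj
        · exact P.le_refl j
        · exact P.le_trans _ _ _ (htop j hj) h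

variable (P : PartialOrder (Fin m)) (G : SimpleGraph (Fin m))

lemma clique_chain (hcomp : G ≤ compGraph P) (C : Finset (Fin m))
    (hC : G.IsClique (C : Set (Fin m))) :
    ∀ a ∈ C, ∀ b ∈ C, P.le a b ∨ P.le b a := by
  intro a ha b hb
  by_cases hab : a = b
  · subst hab; exact Or.inl (P.le_refl a)
  · have := hcomp (hC (by exact_mod_cast ha) (by exact_mod_cast hb) hab)
    rcases this with h | h
    · exact Or.inl ((P.lt_iff_le_not_ge a b).mp h).1
    · exact Or.inr ((P.lt_iff_le_not_ge b a).mp h).1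

/-- The empty clique. -/
def eClq : Cliques G := ⟨∅, by simp⟩

/-- The singleton cliques. -/
def sClq (i : Fin m) : Cliques G := ⟨{i}, by simp⟩

variable (K : Type*) [CommRing K]

/-- The map sending `c_C` to `t` if `C = ∅`, to `b_i` if `C = {i}`, and to `1` otherwise. -/
def Fvar : Cliques G → MvPolynomial (Option (Fin m)) K := fun C =>
  (if C.1 = ∅ then X none else 1) *
    ∏ i ∈ C.1, (if C.1 = {i} then X (some i) else 1)

/-- The map sending `t` to `c_∅` and `b_i` to the product of `c_C` over all cliques `C`
with top element `i`. -/
def Gvar : Option (Fin m) → MvPolynomial (Cliques G) K := fun o =>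
  match o with
  | none => X (eClq G)
  | some i => ∏ C ∈ Finset.univ.filter
      (fun C : Cliques G => i ∈ C.1 ∧ ∀ j ∈ C.1, P.le j i), X C

lemma F_comp :
    (aeval (Fvar G K)).comp (altParamL P G K) = hibiParam P K := by
  apply MvPolynomial.algHom_ext
  intro S
  simp only [AlgHom.comp_apply, altParamL, hibiParam, aeval_X, map_prod]
  unfold Fvar
  rw [Finset.prod_mul_distrib]
  congr 1
  · -- product of the `t`-parts is `X none`
    have h1 : ∀ C : Cliques G, (C.1 = ∅) ↔ (C = eClq G) := by
      intro C; constructor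
      · intro h; exact Subtype.ext h
      · intro h; subst h; rfl
    rw [Finset.prod_congr rfl (fun C _ => by rw [if_congr (h1 C) rfl rfl])]
    rw [Finset.prod_ite_eq' _ (eClq G) (fun _ => (X none : MvPolynomial (Option (Fin m)) K))]
    rw [if_pos]
    simp [eClq]
  · -- product of the `b`-parts is `∏ i ∈ S, X (some i)`
    have h2 : ∀ C : Cliques G, (∏ i ∈ C.1, (if C.1 = {i} then (X (some i) : MvPolynomial (Option (Fin m)) K) else 1))
        = ∏ i ∈ Finset.univ, (if C.1 = {i} then (X (some i) : MvPolynomial (Option (Fin m)) K) else 1) := by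
      intro C
      refine Finset.prod_subset (Finset.subset_univ _) ?_
      intro i _ hi
      rw [if_neg]
      intro h; apply hi; rw [h]; exact Finset.mem_singleton_self i
    rw [Finset.prod_congr rfl (fun C _ => h2 C), Finset.prod_comm]
    have h3 : ∀ i : Fin m, ∀ C : Cliques G, (C.1 = {i}) ↔ (C = sClq G i) := by
      intro i C; constructor
      · intro h; exact Subtype.ext h
      · intro h; subst h; rfl
    calc ∏ i : Fin m, ∏ C ∈ Finset.univ.filter
          (fun C : Cliques G => (C.1 : Finset (Fin m)) ⊆ (S : Finset (Fin m))),
          (if C.1 = {i} then (X (some i) : MvPolynomial (Option (Fin m)) K) else 1)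
        = ∏ i : Fin m, (if (sClq G i) ∈ Finset.univ.filter
          (fun C : Cliques G => (C.1 : Finset (Fin m)) ⊆ (S : Finset (Fin m))) then (X (some i) : MvPolynomial (Option (Fin m)) K) else 1) := by
          refine Finset.prod_congr rfl (fun i _ => ?_)
          rw [Finset.prod_congr rfl (fun C _ => by rw [if_congr (h3 i C) rfl rfl])]
          exact Finset.prod_ite_eq' _ (sClq G i) (fun _ => (X (some i) : MvPolynomial (Option (Fin m)) K))
      _ = ∏ i : Fin m, (if i ∈ (S : Finset (Fin m)) then (X (some i) : MvPolynomial (Option (Fin m)) K) else 1) := by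
          refine Finset.prod_congr rfl (fun i _ => ?_)
          congr 1
          simp only [Finset.mem_filter, Finset.mem_univ, true_and, sClq, eq_iff_iff]
          constructor
          · intro h; exact h (Finset.mem_singleton_self i)
          · intro h j hj; rw [Finset.mem_singleton] at hj; subst hj; exact h
      _ = ∏ i ∈ (S : Finset (Fin m)), (X (some i) : MvPolynomial (Option (Fin m)) K) := by
          rw [← Finset.prod_filter]
          congr 1
          ext i; simp

lemma G_comp (hcomp : G ≤ compGraph P) :
    (aeval (Gvar P G K)).comp (hibiParam P K) = altParamL P G K := by
  apply MvPolynomial.algHom_ext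
  intro S
  simp only [AlgHom.comp_apply, altParamL, hibiParam, aeval_X, map_mul, map_prod]
  -- now: X (eClq G) * ∏ i ∈ S, ∏ C ∈ T i, X C = ∏ C ∈ A, X C
  set T : Fin m → Finset (Cliques G) := fun i => Finset.univ.filter
      (fun C : Cliques G => i ∈ C.1 ∧ ∀ j ∈ C.1, P.le j i) with hT
  have hdisj : (↑(S : Finset (Fin m)) : Set (Fin m)).PairwiseDisjoint T := by
    intro i _ j _ hij
    show Disjoint (T i) (T j)
    rw [Finset.disjoint_left]
    intro C hCi hCj
    simp only [hT, Finset.mem_filter, Finset.mem_univ, true_and] at hCi hCj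
    exact hij (P.le_antisymm _ _ (hCj.2 i hCi.1) (hCi.2 j hCj.1))
  have hB : ∏ i ∈ (S : Finset (Fin m)), ∏ C ∈ T i, (X C : MvPolynomial (Cliques G) K)
      = ∏ C ∈ (S : Finset (Fin m)).biUnion T, (X C : MvPolynomial (Cliques G) K) :=
    (Finset.prod_biUnion hdisj).symm
  rw [show (Gvar P G K none : MvPolynomial (Cliques G) K) = X (eClq G) from rfl]
  rw [Finset.prod_congr rfl (fun i _ => show (Gvar P G K (some i) : MvPolynomial (Cliques G) K) = ∏ C ∈ T i, X C from rfl)]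
  rw [hB]
  have hnot : eClq G ∉ (S : Finset (Fin m)).biUnion T := by
    simp only [Finset.mem_biUnion, hT, Finset.mem_filter, Finset.mem_univ, true_and, not_exists]
    rintro i ⟨-, h1, -⟩
    simp [eClq] at h1
  rw [← Finset.prod_insert hnot]
  congr 1
  ext C
  simp only [Finset.mem_insert, Finset.mem_biUnion, hT, Finset.mem_filter, Finset.mem_univ,
    true_and]
  constructor
  · rintro (rfl | ⟨i, hiS, hiC, htop⟩)
    · exact Finset.empty_subset _
    · intro j hj
      exact S.2 i hiS j (htop j hj)
  · intro hsub
    rcases C.1.eq_empty_or_nonempty with he | hne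
    · exact Or.inl (Subtype.ext he)
    · obtain ⟨i, hi, htop⟩ := exists_top_of_chain P C.1 (clique_chain P G hcomp C.1 C.2) hne
      exact Or.inr ⟨i, hsub hi, hi, htop⟩

end Aux

/-- For any graph `G` whose edges contain all cover relations of `P` and are contained
in the comparability graph of `P`, the lattice graphical model ideal equals the Hibi
ideal: `ker ψ_G = ker φ_L`. -/
theorem ker_altParam_eq_ker_hibiParam_of_between
    (m : ℕ) (P : PartialOrder (Fin m)) (G : SimpleGraph (Fin m))
    (hmin : minimalGraph P ≤ G) (hcomp : G ≤ compGraph P)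
    (K : Type*) [Field K] :
    RingHom.ker (altParamL P G K).toRingHom =
      RingHom.ker (hibiParam P K).toRingHom := by
  ext x
  rw [RingHom.mem_ker, RingHom.mem_ker]
  have h1 : hibiParam P K x = (aeval (Fvar G K)) (altParamL P G K x) := by
    rw [← F_comp P G K]; rfl
  have h2 : altParamL P G K x = (aeval (Gvar P G K)) (hibiParam P K x) := by
    rw [← G_comp P G K hcomp]; rfl
  constructor
  · intro h
    show hibiParam P K x = 0
    rw [h1]
    show (aeval (Fvar G K)) (altParamL P G K x) = 0
    have : (altParamL P G K).toRingHom x = 0 := h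
    rw [show altParamL P G K x = 0 from this, map_zero]
  · intro h
    show altParamL P G K x = 0
    rw [h2]
    have : (hibiParam P K).toRingHom x = 0 := h
    rw [show hibiParam P K x = 0 from this, map_zero]


end
end
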